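/- arXiv:1212.5942 — 7 statements merged into one kernel-verified Lean document; each statement's English description precedes it below -/
import Mathlib

section
/- Let H be a real Hilbert space, let m ≥ 1, and for each i ∈ {1,…,m} let α_i ∈ (0,1), let T_i : H → H be α_i-averaged, and let (e_{i,n})_{n∈ℕ} be a sequence in H. Set α = m·max{α_1,…,α_m}/(1+(m−1)·max{α_1,…,α_m}), let (λ_n)_{n∈ℕ} be a sequence in (0, 1/α), suppose Fix(T_1∘⋯∘T_m) ≠ ∅, suppose Σ_{n∈ℕ} λ_n(1−αλ_n) = +∞ and Σ_{n∈ℕ} λ_n‖e_{i,n}‖ < +∞ for every i, let z_0 ∈ H and define z_{n+1} = z_n + λ_n( T_1(T_2(⋯T_{m−1}(T_m z_n + e_{m,n}) + e_{m−1,n}⋯) + e_{2,n}) + e_{1,n} − z_n ). Then there exists z̄ ∈ Fix(T_1∘⋯∘T_m) such that z_n converges weakly to z̄. -/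
open Filter Topology
open scoped RealInnerProductSpace

variable {H : Type*} [NormedAddCommGroup H] [InnerProductSpace ℝ H] [CompleteSpace H]

/-- `T` is nonexpansive. -/
def IsNonexpansiveOp (T : H → H) : Prop :=
  ∀ x y, ‖T x - T y‖ ≤ ‖x - y‖

/-- `T` is `α`-averaged: `T = (1 - α) • Id + α • R` for some nonexpansive `R`. -/
def IsAveragedOp (α : ℝ) (T : H → H) : Prop :=
  ∃ R : H → H, IsNonexpansiveOp R ∧ ∀ x, T x = (1 - α) • x + α • R x

/-- `z n` converges weakly to `w`. -/
def WeakLim (z : ℕ → H) (w : H) : Prop :=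
  ∀ y : H, Tendsto (fun n => ⟪z n, y⟫) atTop (nhds ⟪w, y⟫)

/-- `compFrom T i k = T i ∘ T (i+1) ∘ ⋯ ∘ T (i+k-1)`; in particular
`compFrom T 1 m = T 1 ∘ ⋯ ∘ T m` and `compFrom T i 0 = id`. -/
def compFrom (T : ℕ → H → H) : ℕ → ℕ → H → H
  | _, 0 => id
  | i, (k + 1) => T i ∘ compFrom T (i + 1) k

/-- Inexact composition with errors: `inexactFrom T e 1 m z =
T 1 (T 2 (⋯ T (m-1) (T m z + e m) + e (m-1) ⋯) + e 2) + e 1`. -/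
def inexactFrom (T : ℕ → H → H) (e : ℕ → H) : ℕ → ℕ → H → H
  | _, 0 => id
  | i, (k + 1) => fun z => T i (inexactFrom T e (i + 1) k z) + e i

/-!
With `ρ = α / (1 - α)`, a map `T` is `α`-averaged iff
`ρ ‖T x - T y‖² + ‖(x - T x) - (y - T y)‖² ≤ ρ ‖x - y‖²`, and these constants `ρ` add up
under composition. Since every `T i` is `M`-averaged, `S = T 1 ∘ ⋯ ∘ T m` gets
`ρ = m M / (1 - M)`, i.e. `S` is `α`-averaged: `S = (1 - α) Id + α R` with `R` nonexpansive and
`Fix S = Fix R`. The scheme is therefore the Krasnosel'skiĭ–Mann iteration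
`z + μₙ (R z - z) + fₙ` with `μₙ = α λₙ ∈ (0, 1)` and `‖fₙ‖ ≤ λₙ ∑ᵢ ‖e i n‖` summable, the inner
errors being propagated by nonexpansiveness. For it, `‖zₙ - x‖` converges for every fixed point
`x` (quasi-Fejér monotonicity), and the descent inequality gives
`∑ μₙ (1 - μₙ) ‖R zₙ - zₙ‖² < ∞`, so that the residual `‖R zₙ - zₙ‖` tends to `0`.
Demiclosedness of `Id - R` puts every weak cluster point in `Fix R`, and Opial's lemma yields
weak convergence.
-/

open Set

section
variable {E : Type*} [NormedAddCommGroup E]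

/-- For `ρ = α / (1 - α)` this is the usual characterization of `α`-averagedness
(`isAveragedOp_iff`); in this parametrization the constants simply add up under composition
(`IsAveragedWith.comp`). -/
def IsAveragedWith (ρ : ℝ) (T : E → E) : Prop :=
  ∀ x y, ρ * ‖T x - T y‖ ^ 2 + ‖(x - T x) - (y - T y)‖ ^ 2 ≤ ρ * ‖x - y‖ ^ 2

theorem IsAveragedWith.isNonexpansiveOp {ρ : ℝ} {T : E → E} (hT : IsAveragedWith ρ T)
    (hρ : 0 < ρ) : IsNonexpansiveOp T := fun x y => by
  have : ‖T x - T y‖ ^ 2 ≤ ‖x - y‖ ^ 2 := by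
    nlinarith [hT x y, sq_nonneg ‖(x - T x) - (y - T y)‖]
  exact (pow_le_pow_iff_left₀ (norm_nonneg _) (norm_nonneg _) two_ne_zero).1 this

theorem IsAveragedWith.mono {ρ σ : ℝ} {T : E → E} (hT : IsAveragedWith ρ T) (hρ : 0 < ρ)
    (hρσ : ρ ≤ σ) : IsAveragedWith σ T := fun x y => by
  have : ‖T x - T y‖ ^ 2 ≤ ‖x - y‖ ^ 2 := by gcongr; exact hT.isNonexpansiveOp hρ x y
  nlinarith [hT x y]

theorem norm_inexactFrom_sub_compFrom_le {T : ℕ → E → E} (e : ℕ → E) (z : E) {i k : ℕ}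
    (hT : ∀ j ∈ Finset.Ico i (i + k), IsNonexpansiveOp (T j)) :
    ‖inexactFrom T e i k z - compFrom T i k z‖ ≤ ∑ j ∈ Finset.Ico i (i + k), ‖e j‖ := by
  induction k generalizing i with
  | zero => simp [inexactFrom, compFrom]
  | succ k ih =>
    have hrest := ih (i := i + 1) fun j hj => hT j (by simp at hj ⊢; omega)
    rw [Finset.sum_eq_sum_Ico_succ_bot (by omega), ← add_assoc, add_right_comm]
    calc ‖T i (inexactFrom T e (i + 1) k z) + e i - T i (compFrom T (i + 1) k z)‖
        ≤ ‖T i (inexactFrom T e (i + 1) k z) - T i (compFrom T (i + 1) k z)‖ + ‖e i‖ := by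
          rw [add_sub_right_comm]; exact norm_add_le _ _
      _ ≤ ‖e i‖ + ∑ j ∈ Finset.Ico (i + 1) (i + 1 + k), ‖e j‖ := by
          linarith [hT i (by simp) (inexactFrom T e (i + 1) k z) (compFrom T (i + 1) k z)]

theorem exists_norm_le_of_tendsto_norm_sub {z : ℕ → E} {x : E} {r : ℝ}
    (h : Tendsto (fun n => ‖z n - x‖) atTop (𝓝 r)) : ∃ B, ∀ n, ‖z n‖ ≤ B := by
  obtain ⟨B, hB⟩ := h.bddAbove_range
  exact ⟨B + ‖x‖, fun n => by linarith [norm_le_norm_sub_add (z n) x, hB ⟨n, rfl⟩]⟩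

end

theorem tendsto_of_le_add_summable {b c : ℕ → ℝ} (hb : ∀ n, 0 ≤ b n) (hc : Summable c)
    (hbc : ∀ n, b (n + 1) ≤ b n + c n) : ∃ l, Tendsto b atTop (𝓝 l) := by
  set s := fun n => ∑ k ∈ Finset.range n, c k
  have hanti : Antitone fun n => b n - s n := antitone_nat_of_succ_le fun n => by
    simp only [s, Finset.sum_range_succ]; linarith [hbc n]
  have hs : Tendsto s atTop (𝓝 (∑' k, c k)) := hc.hasSum.tendsto_sum_nat
  have hbdd : BddBelow (range fun n => b n - s n) := by
    obtain ⟨B, hB⟩ := hs.bddAbove_range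
    exact ⟨-B, by rintro _ ⟨n, rfl⟩; linarith [hb n, hB ⟨n, rfl⟩]⟩
  exact ⟨_, by simpa using (tendsto_atTop_ciInf hanti hbdd).add hs⟩

theorem summable_of_le_sub_add {u v c : ℕ → ℝ} (hu : ∀ n, 0 ≤ u n) (hv : ∀ n, 0 ≤ v n)
    (hc : ∀ n, 0 ≤ c n) (hcs : Summable c) (huv : ∀ n, u n ≤ v n - v (n + 1) + c n) :
    Summable u := by
  refine summable_of_sum_range_le (c := v 0 + ∑' k, c k) hu fun n => ?_
  calc ∑ k ∈ Finset.range n, u k ≤ ∑ k ∈ Finset.range n, (v k - v (k + 1) + c k) :=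
        Finset.sum_le_sum fun k _ => huv k
    _ = v 0 - v n + ∑ k ∈ Finset.range n, c k := by
        rw [Finset.sum_add_distrib, Finset.sum_range_sub']
    _ ≤ v 0 + ∑' k, c k := by linarith [hv n, hcs.sum_le_tsum (Finset.range n) fun k _ => hc k]

theorem eq_zero_of_tendsto_of_summable_mul_sq {a w : ℕ → ℝ} {l : ℝ}
    (ha : Tendsto a atTop (𝓝 l)) (hw : ∀ n, 0 ≤ w n) (hdiv : ¬ Summable w)
    (hsum : Summable fun n => w n * a n ^ 2) : l = 0 := by
  by_contra hl
  have hl2 : 0 < l ^ 2 / 2 := by positivity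
  have hev : ∀ᶠ n in atTop, l ^ 2 / 2 < a n ^ 2 :=
    (ha.pow 2).eventually (lt_mem_nhds (by linarith))
  refine hdiv (Summable.of_norm_bounded_eventually (hsum.mul_left (2 / l ^ 2)) ?_)
  rw [Nat.cofinite_eq_atTop]
  filter_upwards [hev] with n hn
  have h1 : 1 ≤ 2 / l ^ 2 * a n ^ 2 := by
    rw [div_mul_eq_mul_div, le_div_iff₀ (by positivity)]; linarith
  rw [Real.norm_of_nonneg (hw n)]
  nlinarith [hw n]

section
variable {E : Type*} [NormedAddCommGroup E] [InnerProductSpace ℝ E]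

theorem isAveragedWith_iff_isNonexpansiveOp {α : ℝ} (hα : α ∈ Ioo (0 : ℝ) 1) {T R : E → E}
    (hTR : ∀ x, T x = (1 - α) • x + α • R x) :
    IsAveragedWith (α / (1 - α)) T ↔ IsNonexpansiveOp R := by
  have h1α : 0 < 1 - α := sub_pos.2 hα.2
  have hα2 : 0 < α ^ 2 := pow_pos hα.1 2
  refine forall₂_congr fun x y => ?_
  have key : (1 - α) * (α / (1 - α) * ‖T x - T y‖ ^ 2 + ‖(x - T x) - (y - T y)‖ ^ 2
      - α / (1 - α) * ‖x - y‖ ^ 2) = α ^ 2 * (‖R x - R y‖ ^ 2 - ‖x - y‖ ^ 2) := by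
    have hT : T x - T y = (1 - α) • (x - y) + α • (R x - R y) := by rw [hTR, hTR]; module
    have hΔ : (x - T x) - (y - T y) = α • ((x - y) - (R x - R y)) := by rw [hTR, hTR]; module
    rw [hT, hΔ]
    simp only [← real_inner_self_eq_norm_sq, inner_add_left, inner_add_right, inner_sub_left,
      inner_sub_right, real_inner_smul_left, real_inner_smul_right, real_inner_comm (x - y)]
    field_simp
    ring
  rw [← pow_le_pow_iff_left₀ (norm_nonneg _) (norm_nonneg _) two_ne_zero]
  constructor <;> intro h <;> nlinarith

theorem isAveragedOp_iff {α : ℝ} (hα : α ∈ Ioo (0 : ℝ) 1) {T : E → E} :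
    IsAveragedOp α T ↔ IsAveragedWith (α / (1 - α)) T := by
  constructor
  · rintro ⟨R, hR, hTR⟩
    exact (isAveragedWith_iff_isNonexpansiveOp hα hTR).2 hR
  · intro hT
    have hTR : ∀ x, T x = (1 - α) • x + α • (x + α⁻¹ • (T x - x)) := fun x => by
      rw [smul_add, smul_smul, mul_inv_cancel₀ hα.1.ne']
      module
    exact ⟨_, (isAveragedWith_iff_isNonexpansiveOp hα hTR).1 hT, hTR⟩

theorem IsAveragedOp.isNonexpansiveOp {α : ℝ} (hα : α ∈ Ioo (0 : ℝ) 1) {T : E → E}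
    (hT : IsAveragedOp α T) : IsNonexpansiveOp T :=
  ((isAveragedOp_iff hα).1 hT).isNonexpansiveOp (div_pos hα.1 (sub_pos.2 hα.2))

theorem mul_mul_norm_add_sq_le (ρ σ : ℝ) (u v : E) :
    ρ * σ * ‖u + v‖ ^ 2 ≤ ρ * (ρ + σ) * ‖u‖ ^ 2 + σ * (ρ + σ) * ‖v‖ ^ 2 := by
  have h := sq_nonneg ‖ρ • u - σ • v‖
  simp only [← real_inner_self_eq_norm_sq, inner_add_left, inner_add_right, inner_sub_left,
      inner_sub_right, real_inner_smul_left, real_inner_smul_right, real_inner_comm u] at h ⊢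
  nlinarith [h]

theorem IsAveragedWith.comp {ρ σ : ℝ} {T₁ T₂ : E → E} (h₁ : IsAveragedWith ρ T₁)
    (h₂ : IsAveragedWith σ T₂) (hρ : 0 < ρ) (hσ : 0 < σ) :
    IsAveragedWith (ρ + σ) (T₁ ∘ T₂) := fun x y => by
  have hsplit : (x - T₁ (T₂ x)) - (y - T₁ (T₂ y))
      = ((x - T₂ x) - (y - T₂ y)) + ((T₂ x - T₁ (T₂ x)) - (T₂ y - T₁ (T₂ y))) := by abel
  have h := mul_mul_norm_add_sq_le ρ σ ((x - T₂ x) - (y - T₂ y))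
    ((T₂ x - T₁ (T₂ x)) - (T₂ y - T₁ (T₂ y)))
  rw [← hsplit] at h
  have h₁' := mul_le_mul_of_nonneg_left (h₁ (T₂ x) (T₂ y)) (by positivity : 0 ≤ σ * (ρ + σ))
  have h₂' := mul_le_mul_of_nonneg_left (h₂ x y) (by positivity : 0 ≤ ρ * (ρ + σ))
  have hρσ : 0 < ρ * σ := mul_pos hρ hσ
  show (ρ + σ) * ‖T₁ (T₂ x) - T₁ (T₂ y)‖ ^ 2 + ‖(x - T₁ (T₂ x)) - (y - T₁ (T₂ y))‖ ^ 2
    ≤ (ρ + σ) * ‖x - y‖ ^ 2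
  nlinarith

theorem isAveragedWith_compFrom {T : ℕ → E → E} {ρ : ℝ} (hρ : 0 < ρ) {i k : ℕ} (hk : 1 ≤ k)
    (hT : ∀ j ∈ Finset.Ico i (i + k), IsAveragedWith ρ (T j)) :
    IsAveragedWith (k * ρ) (compFrom T i k) := by
  induction k, hk using Nat.le_induction generalizing i with
  | base => simpa [compFrom] using hT i (by simp)
  | succ k hk ih =>
    have hi : IsAveragedWith ρ (T i) := hT i (by simp)
    have hrest := ih (i := i + 1) fun j hj => hT j (by simp at hj ⊢; omega)
    have := hi.comp hrest hρ (by positivity)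
    simpa [compFrom, add_mul, add_comm] using this

theorem isAveragedOp_compFrom {T : ℕ → E → E} {αi : ℕ → ℝ} {M : ℝ} (hM : M ∈ Ioo (0 : ℝ) 1)
    {i k : ℕ} (hk : 1 ≤ k) (hα : ∀ j ∈ Finset.Ico i (i + k), αi j ∈ Ioo (0 : ℝ) 1 ∧ αi j ≤ M)
    (hT : ∀ j ∈ Finset.Ico i (i + k), IsAveragedOp (αi j) (T j)) :
    IsAveragedOp (k * M / (1 + (k - 1) * M)) (compFrom T i k) := by
  have h1M : 0 < 1 - M := sub_pos.2 hM.2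
  have hk' : (1 : ℝ) ≤ k := by exact_mod_cast hk
  have hden : 0 < 1 + (k - 1) * M := by nlinarith [hM.1]
  have hmem : k * M / (1 + (k - 1) * M) ∈ Ioo (0 : ℝ) 1 :=
    ⟨by have := hM.1; positivity, by rw [div_lt_one hden]; linarith⟩
  have hρ : k * M / (1 + (k - 1) * M) / (1 - k * M / (1 + (k - 1) * M)) = k * (M / (1 - M)) := by
    rw [one_sub_div hden.ne', div_div_div_cancel_right₀ hden.ne',
      show 1 + (k - 1) * M - k * M = 1 - M by ring, mul_div_assoc]
  rw [isAveragedOp_iff hmem, hρ]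
  refine isAveragedWith_compFrom (div_pos hM.1 h1M) hk fun j hj => ?_
  obtain ⟨hαj, hαjM⟩ := hα j hj
  refine ((isAveragedOp_iff hαj).1 (hT j hj)).mono (div_pos hαj.1 (sub_pos.2 hαj.2)) ?_
  have := hαj.2
  have := hM.1.le
  gcongr

section Weak
variable {ι : Type*}

def WeakTendsto (z : ι → E) (l : Filter ι) (w : E) : Prop :=
  ∀ y, Tendsto (fun i => ⟪z i, y⟫) l (𝓝 ⟪w, y⟫)

theorem exists_weakTendsto_of_norm_le [CompleteSpace E] (U : Ultrafilter ι) {z : ι → E} {B : ℝ}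
    (hB : ∀ i, ‖z i‖ ≤ B) : ∃ w, WeakTendsto z U w := by
  have hlim : ∀ y : E, ∃ L, |L| ≤ B * ‖y‖ ∧ Tendsto (fun i => ⟪z i, y⟫) U (𝓝 L) := by
    intro y
    have hmem : ∀ i, ⟪z i, y⟫ ∈ Icc (-(B * ‖y‖)) (B * ‖y‖) := fun i =>
      abs_le.1 ((abs_real_inner_le_norm _ _).trans (by gcongr; exact hB i))
    obtain ⟨L, hL, hUL⟩ := isCompact_Icc.ultrafilter_le_nhds (U.map fun i => ⟪z i, y⟫)
      (by rw [Ultrafilter.coe_map]; exact tendsto_principal.2 (Eventually.of_forall hmem))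
    exact ⟨L, abs_le.2 hL, hUL⟩
  choose L hLB hL using hlim
  let φ : E →ₗ[ℝ] ℝ :=
    { toFun := L
      map_add' := fun y₁ y₂ => tendsto_nhds_unique (hL (y₁ + y₂))
        (by simpa only [inner_add_right] using (hL y₁).add (hL y₂))
      map_smul' := fun r y => tendsto_nhds_unique (hL (r • y))
        (by simpa only [real_inner_smul_right, RingHom.id_apply, smul_eq_mul]
          using (hL y).const_mul r) }
  refine ⟨(InnerProductSpace.toDual ℝ E).symm (φ.mkContinuous B fun y => hLB y), fun y => ?_⟩
  rw [InnerProductSpace.toDual_symm_apply]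
  exact hL y

theorem WeakTendsto.eq_of_tendsto_norm_sub {z : ι → E} {l U V : Filter ι} [U.NeBot] [V.NeBot]
    (hU : U ≤ l) (hV : V ≤ l) {w w' : E} (hw : WeakTendsto z U w) (hw' : WeakTendsto z V w')
    {r r' : ℝ} (hr : Tendsto (fun i => ‖z i - w‖) l (𝓝 r))
    (hr' : Tendsto (fun i => ‖z i - w'‖) l (𝓝 r')) : w = w' := by
  have hpolar : ∀ i, ⟪z i, w - w'⟫ = (‖z i - w'‖ ^ 2 - ‖z i - w‖ ^ 2 - ‖w'‖ ^ 2 + ‖w‖ ^ 2) / 2 :=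
    fun i => by rw [norm_sub_sq_real, norm_sub_sq_real, inner_sub_right]; ring
  have hlim : Tendsto (fun i => ⟪z i, w - w'⟫) l
      (𝓝 ((r' ^ 2 - r ^ 2 - ‖w'‖ ^ 2 + ‖w‖ ^ 2) / 2)) := by
    simp only [hpolar]
    exact ((((hr'.pow 2).sub (hr.pow 2)).sub_const _).add_const _).div_const 2
  have h : ⟪w - w', w - w'⟫ = 0 := by
    rw [inner_sub_left, tendsto_nhds_unique (hw (w - w')) (hlim.mono_left hU),
      tendsto_nhds_unique (hw' (w - w')) (hlim.mono_left hV), sub_self]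
  exact sub_eq_zero.1 (inner_self_eq_zero.1 h)

theorem IsNonexpansiveOp.apply_eq_of_weakTendsto {R : E → E} (hR : IsNonexpansiveOp R)
    {z : ι → E} {l : Filter ι} [l.NeBot] {B : ℝ} (hB : ∀ i, ‖z i‖ ≤ B) {w : E}
    (hw : WeakTendsto z l w) (hRz : Tendsto (fun i => ‖R (z i) - z i‖) l (𝓝 0)) : R w = w := by
  set q := w - R w
  have hbound : ∀ i, 2 * (⟪z i, q⟫ - ⟪w, q⟫) + ‖q‖ ^ 2
      ≤ ‖R (z i) - z i‖ * (‖R (z i) - z i‖ + 2 * (B + ‖w‖)) := fun i => by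
    have hsq : ‖z i - R w‖ ^ 2 = ‖z i - w‖ ^ 2 + 2 * (⟪z i, q⟫ - ⟪w, q⟫) + ‖q‖ ^ 2 := by
      rw [show z i - R w = (z i - w) + (w - R w) by abel, norm_add_sq_real, inner_sub_left]
    have htri : ‖z i - R w‖ ≤ ‖R (z i) - z i‖ + ‖z i - w‖ := by
      calc ‖z i - R w‖ = ‖(z i - R (z i)) + (R (z i) - R w)‖ := by congr 1; abel
        _ ≤ ‖z i - R (z i)‖ + ‖R (z i) - R w‖ := norm_add_le _ _
        _ ≤ ‖R (z i) - z i‖ + ‖z i - w‖ := by rw [norm_sub_rev]; gcongr; exact hR _ _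
    have hzw : ‖z i - w‖ ≤ B + ‖w‖ := (norm_sub_le _ _).trans (by linarith [hB i])
    nlinarith [norm_nonneg (z i - R w), norm_nonneg (R (z i) - z i), norm_nonneg (z i - w)]
  have hlim := le_of_tendsto_of_tendsto' ((((hw q).sub_const ⟪w, q⟫).const_mul 2).add_const _)
    (hRz.mul (hRz.add_const _)) hbound
  simp only [sub_self, mul_zero, zero_add, zero_mul] at hlim
  exact (sub_eq_zero.1 (norm_eq_zero.1 (by nlinarith [norm_nonneg q]))).symm

end Weak

/-- Opial's lemma, with weak cluster points taken along ultrafilters. -/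
theorem exists_weakLim_of_tendsto_norm_sub [CompleteSpace E] {F : Set E} {z : ℕ → E}
    (hF : F.Nonempty) (hdist : ∀ x ∈ F, ∃ r, Tendsto (fun n => ‖z n - x‖) atTop (𝓝 r))
    (hclus : ∀ U : Ultrafilter ℕ, (U : Filter ℕ) ≤ atTop → ∀ w, WeakTendsto z U w → w ∈ F) :
    ∃ w ∈ F, WeakLim z w := by
  obtain ⟨x₀, hx₀⟩ := hF
  obtain ⟨r₀, hr₀⟩ := hdist x₀ hx₀
  obtain ⟨B, hB⟩ := exists_norm_le_of_tendsto_norm_sub hr₀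
  obtain ⟨U, hU⟩ := Filter.exists_ultrafilter_le (atTop : Filter ℕ)
  obtain ⟨w, hw⟩ := exists_weakTendsto_of_norm_le U hB
  have hwF := hclus U hU w hw
  refine ⟨w, hwF, fun y => (tendsto_iff_ultrafilter _ _ _).2 fun V hV => ?_⟩
  obtain ⟨w', hw'⟩ := exists_weakTendsto_of_norm_le V hB
  obtain ⟨r, hr⟩ := hdist w hwF
  obtain ⟨r', hr'⟩ := hdist w' (hclus V hV w' hw')
  rw [hw.eq_of_tendsto_norm_sub hU hV hw' hr hr']
  exact hw' y

theorem IsNonexpansiveOp.norm_step_sub_sq_le {R : E → E} (hR : IsNonexpansiveOp R) {x : E}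
    (hx : R x = x) (y : E) {μ : ℝ} (hμ : 0 ≤ μ) :
    ‖y + μ • (R y - y) - x‖ ^ 2 ≤ ‖y - x‖ ^ 2 - μ * (1 - μ) * ‖R y - y‖ ^ 2 := by
  have hv : ‖R y - x‖ ^ 2 ≤ ‖y - x‖ ^ 2 := by gcongr; simpa [hx] using hR y x
  rw [show y + μ • (R y - y) - x = (y - x) + μ • ((R y - x) - (y - x)) by module,
    show R y - y = (R y - x) - (y - x) by abel]
  generalize y - x = u at *
  generalize R y - x = v at *
  simp only [← real_inner_self_eq_norm_sq, inner_add_left, inner_add_right, inner_sub_left,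
    inner_sub_right, real_inner_smul_left, real_inner_smul_right, real_inner_comm u] at hv ⊢
  nlinarith [mul_le_mul_of_nonneg_left hv hμ]

theorem IsNonexpansiveOp.norm_step_sub_le {R : E → E} (hR : IsNonexpansiveOp R) {x : E}
    (hx : R x = x) (y : E) {μ : ℝ} (hμ : μ ∈ Icc (0 : ℝ) 1) :
    ‖y + μ • (R y - y) - x‖ ≤ ‖y - x‖ := by
  have hsq := hR.norm_step_sub_sq_le hx y hμ.1
  have : 0 ≤ μ * (1 - μ) * ‖R y - y‖ ^ 2 :=
    mul_nonneg (mul_nonneg hμ.1 (sub_nonneg.2 hμ.2)) (sq_nonneg _)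
  exact (pow_le_pow_iff_left₀ (norm_nonneg _) (norm_nonneg _) two_ne_zero).1 (by linarith)

def IsKrasnoselskiiMannSeq (R : E → E) (μ : ℕ → ℝ) (f z : ℕ → E) : Prop :=
  ∀ n, z (n + 1) = z n + μ n • (R (z n) - z n) + f n

namespace IsKrasnoselskiiMannSeq
variable {R : E → E} {μ : ℕ → ℝ} {f z : ℕ → E}

theorem norm_sub_succ_le (hz : IsKrasnoselskiiMannSeq R μ f z) (hR : IsNonexpansiveOp R)
    (hμ : ∀ n, μ n ∈ Icc (0 : ℝ) 1) {x : E} (hx : R x = x) (n : ℕ) :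
    ‖z (n + 1) - x‖ ≤ ‖z n - x‖ + ‖f n‖ := by
  rw [hz n, add_sub_right_comm]
  exact (norm_add_le _ _).trans (by gcongr; exact hR.norm_step_sub_le hx (z n) (hμ n))

theorem norm_residual_succ_le (hz : IsKrasnoselskiiMannSeq R μ f z) (hR : IsNonexpansiveOp R)
    (hμ : ∀ n, μ n ∈ Icc (0 : ℝ) 1) (n : ℕ) :
    ‖R (z (n + 1)) - z (n + 1)‖ ≤ ‖R (z n) - z n‖ + 2 * ‖f n‖ := by
  have hsplit : R (z (n + 1)) - z (n + 1)
      = (R (z (n + 1)) - R (z n)) + ((1 - μ n) • (R (z n) - z n) - f n) := by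
    rw [hz n]; module
  have hmove : ‖z (n + 1) - z n‖ ≤ μ n * ‖R (z n) - z n‖ + ‖f n‖ := by
    rw [hz n, add_sub_right_comm, add_sub_cancel_left, ← norm_smul_of_nonneg (hμ n).1]
    exact norm_add_le _ _
  have hrest : ‖(1 - μ n) • (R (z n) - z n) - f n‖ ≤ (1 - μ n) * ‖R (z n) - z n‖ + ‖f n‖ := by
    rw [← norm_smul_of_nonneg (sub_nonneg.2 (hμ n).2)]
    exact norm_sub_le _ _
  rw [hsplit]
  linarith [norm_add_le (R (z (n + 1)) - R (z n)) ((1 - μ n) • (R (z n) - z n) - f n),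
    hR (z (n + 1)) (z n)]

theorem tendsto_residual (hz : IsKrasnoselskiiMannSeq R μ f z) (hR : IsNonexpansiveOp R)
    {x₀ : E} (hx₀ : R x₀ = x₀) (hμ : ∀ n, μ n ∈ Icc (0 : ℝ) 1)
    (hdiv : ¬ Summable fun n => μ n * (1 - μ n)) (hf : Summable fun n => ‖f n‖) :
    Tendsto (fun n => ‖R (z n) - z n‖) atTop (𝓝 0) := by
  have hμ' : ∀ n, 0 ≤ μ n * (1 - μ n) := fun n => mul_nonneg (hμ n).1 (sub_nonneg.2 (hμ n).2)
  obtain ⟨r, hr⟩ := tendsto_of_le_add_summable (b := fun n => ‖z n - x₀‖)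
    (fun n => norm_nonneg _) hf (hz.norm_sub_succ_le hR hμ hx₀)
  obtain ⟨B, hB⟩ := hr.bddAbove_range
  have hB0 : 0 ≤ B := (norm_nonneg _).trans (hB ⟨0, rfl⟩)
  have hdescent : ∀ n, μ n * (1 - μ n) * ‖R (z n) - z n‖ ^ 2
      ≤ ‖z n - x₀‖ ^ 2 - ‖z (n + 1) - x₀‖ ^ 2 + 2 * B * ‖f n‖ := fun n => by
    set p := z n + μ n • (R (z n) - z n)
    have hsq := hR.norm_step_sub_sq_le hx₀ (z n) (hμ n).1
    have hp := hR.norm_step_sub_le hx₀ (z n) (hμ n)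
    have hnext : ‖z (n + 1) - x₀‖ ≤ ‖p - x₀‖ + ‖f n‖ := by
      rw [hz n, add_sub_right_comm]; exact norm_add_le _ _
    have hB₀ : ‖z n - x₀‖ ≤ B := hB ⟨n, rfl⟩
    have hB₁ : ‖z (n + 1) - x₀‖ ≤ B := hB ⟨n + 1, rfl⟩
    -- `‖z (n + 1) - x₀‖² - ‖p - x₀‖² ≤ ‖f n‖ (‖z (n + 1) - x₀‖ + ‖p - x₀‖) ≤ 2 B ‖f n‖`
    nlinarith [mul_nonneg (sub_nonneg.2 hnext) (add_nonneg (norm_nonneg (z (n + 1) - x₀))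
      (norm_nonneg (p - x₀))), norm_nonneg (f n)]
  have hsum : Summable fun n => μ n * (1 - μ n) * ‖R (z n) - z n‖ ^ 2 :=
    summable_of_le_sub_add (fun n => mul_nonneg (hμ' n) (sq_nonneg _)) (fun n => sq_nonneg _)
      (fun n => by positivity) (hf.mul_left (2 * B)) hdescent
  obtain ⟨l, hl⟩ := tendsto_of_le_add_summable (b := fun n => ‖R (z n) - z n‖)
    (fun n => norm_nonneg _) (hf.mul_left 2) (hz.norm_residual_succ_le hR hμ)
  rwa [← eq_zero_of_tendsto_of_summable_mul_sq hl hμ' hdiv hsum]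

theorem exists_weakLim [CompleteSpace E] (hz : IsKrasnoselskiiMannSeq R μ f z)
    (hR : IsNonexpansiveOp R) (hfix : ∃ x, R x = x) (hμ : ∀ n, μ n ∈ Icc (0 : ℝ) 1)
    (hdiv : ¬ Summable fun n => μ n * (1 - μ n)) (hf : Summable fun n => ‖f n‖) :
    ∃ w, R w = w ∧ WeakLim z w := by
  have hdist (x : E) (hx : R x = x) : ∃ r, Tendsto (fun n => ‖z n - x‖) atTop (𝓝 r) :=
    tendsto_of_le_add_summable (fun n => norm_nonneg _) hf (hz.norm_sub_succ_le hR hμ hx)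
  obtain ⟨x₀, hx₀⟩ := hfix
  obtain ⟨r, hr⟩ := hdist x₀ hx₀
  obtain ⟨B, hB⟩ := exists_norm_le_of_tendsto_norm_sub hr
  have hres := hz.tendsto_residual hR hx₀ hμ hdiv hf
  exact exists_weakLim_of_tendsto_norm_sub (F := Function.fixedPoints R) ⟨x₀, hx₀⟩ hdist
    fun U hU w hw => hR.apply_eq_of_weakTendsto hB hw (hres.mono_left hU)

end IsKrasnoselskiiMannSeq
end

theorem statement0
    (m : ℕ) (hm : 1 ≤ m)
    (αi : ℕ → ℝ) (T : ℕ → H → H) (e : ℕ → ℕ → H)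
    (hαi : ∀ i ∈ Finset.Icc 1 m, αi i ∈ Set.Ioo (0 : ℝ) 1)
    (hT : ∀ i ∈ Finset.Icc 1 m, IsAveragedOp (αi i) (T i))
    (M α : ℝ)
    (hM1 : ∀ i ∈ Finset.Icc 1 m, αi i ≤ M)
    (hM2 : ∃ i ∈ Finset.Icc 1 m, αi i = M)
    (hα : α = (m : ℝ) * M / (1 + ((m : ℝ) - 1) * M))
    (lam : ℕ → ℝ) (hlam : ∀ n, lam n ∈ Set.Ioo (0 : ℝ) (1 / α))
    (hfix : ∃ x : H, compFrom T 1 m x = x)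
    (hdiv : ¬ Summable (fun n => lam n * (1 - α * lam n)))
    (herr : ∀ i ∈ Finset.Icc 1 m, Summable (fun n => lam n * ‖e i n‖))
    (z : ℕ → H)
    (hz : ∀ n, z (n + 1) = z n + lam n • (inexactFrom T (fun i => e i n) 1 m (z n) - z n)) :
    ∃ zbar : H, compFrom T 1 m zbar = zbar ∧ WeakLim z zbar := by
  have hIcc : Finset.Icc 1 m = Finset.Ico 1 (1 + m) := by
    rw [add_comm, Finset.Ico_add_one_right_eq_Icc]
  rw [hIcc] at hαi hT hM1 hM2 herr
  obtain ⟨i₀, hi₀, rfl⟩ := hM2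
  obtain ⟨R, hR, hSR⟩ : IsAveragedOp α (compFrom T 1 m) :=
    hα ▸ isAveragedOp_compFrom (hαi i₀ hi₀) hm (fun j hj => ⟨hαi j hj, hM1 j hj⟩) hT
  have hα0 : 0 < α := one_div_pos.1 ((hlam 0).1.trans (hlam 0).2)
  have hfixR (x : H) : compFrom T 1 m x = x ↔ R x = x := by
    have hdiff : compFrom T 1 m x - x = α • (R x - x) := by rw [hSR]; module
    rw [← sub_eq_zero, hdiff, smul_eq_zero, sub_eq_zero, or_iff_right hα0.ne']
  set ε := fun n => inexactFrom T (fun i => e i n) 1 m (z n) - compFrom T 1 m (z n)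
  have hε (n : ℕ) : ‖lam n • ε n‖ ≤ ∑ i ∈ Finset.Ico 1 (1 + m), lam n * ‖e i n‖ := by
    rw [norm_smul_of_nonneg (hlam n).1.le, ← Finset.mul_sum]
    exact mul_le_mul_of_nonneg_left (norm_inexactFrom_sub_compFrom_le _ _ fun j hj =>
      (hT j hj).isNonexpansiveOp (hαi j hj)) (hlam n).1.le
  have hkm : IsKrasnoselskiiMannSeq R (fun n => α * lam n) (fun n => lam n • ε n) z := fun n => by
    rw [hz n]; simp only [ε]; rw [hSR]; module
  obtain ⟨w, hRw, hw⟩ := hkm.exists_weakLim hR (hfix.imp fun x => (hfixR x).1)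
    (fun n => ⟨mul_nonneg hα0.le (hlam n).1.le, ((lt_div_iff₀' hα0).1 (hlam n).2).le⟩)
    (fun h => hdiv ((summable_mul_left_iff hα0.ne').1 (by simpa only [mul_assoc] using h)))
    (Summable.of_nonneg_of_le (fun n => norm_nonneg _) hε (summable_sum herr))
  exact ⟨w, (hfixR w).2 hRw, hw⟩
end

section
/- Let H be a real Hilbert space, let V be a closed vector subspace of H with orthogonal projection P_V, let β > 0, let B : H → H satisfy ⟨x − y, Bx − By⟩ ≥ β‖Bx − By‖² for all x, y ∈ V, and let γ ∈ (0, 2β). Then the operator S_γ = Id − γ P_V∘B∘P_V is γ/(2β)-averaged. -/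
open Filter Topology
open scoped RealInnerProductSpace Pointwise

variable {H : Type*} [NormedAddCommGroup H] [InnerProductSpace ℝ H] [CompleteSpace H]

/-- A set-valued operator `A : H → 2^H` is monotone. -/
def IsMonotoneOp (A : H → Set H) : Prop :=
  ∀ x y u v : H, u ∈ A x → v ∈ A y → 0 ≤ ⟪x - y, u - v⟫

/-- A set-valued operator is maximally monotone: it is monotone and its graph is not
properly contained in the graph of any monotone operator. -/
def IsMaxMonotoneOp (A : H → Set H) : Prop :=
  IsMonotoneOp A ∧ ∀ x u : H, (∀ y v : H, v ∈ A y → 0 ≤ ⟪x - y, u - v⟫) → u ∈ A x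

/-- The normal cone to a closed vector subspace `V`: it maps `x ∈ V` to `Vᗮ`
and `x ∉ V` to `∅`. -/
def normalConeSub (V : Submodule ℝ H) : H → Set H :=
  fun x => {w | x ∈ V ∧ w ∈ Vᗮ}

/-- The partial inverse of a set-valued operator `M` with respect to a subspace with
orthogonal projection `P` (so that `P_{V⊥} = id - P`):
`y ∈ M_V x ↔ P_V y + P_{V⊥} x ∈ M (P_V x + P_{V⊥} y)`. -/
def partialInvOp (P : H → H) (M : H → Set H) : H → Set H :=
  fun x => {y | P y + (x - P x) ∈ M (P x + (y - P y))}

/-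
Set `C := P ∘ B ∘ P`. Since `P` is self-adjoint and contracts norms, `C` inherits the
`β`-cocoercivity of `B` on `V`, but now on all of `H`. A `β`-cocoercive operator `C` makes
`Id - 2β C` nonexpansive, and `Id - γ C = (1 - γ/(2β)) Id + γ/(2β) (Id - 2β C)`.
-/

def IsCocoerciveOn (β : ℝ) (B : H → H) (s : Set H) : Prop :=
  ∀ x ∈ s, ∀ y ∈ s, β * ‖B x - B y‖ ^ 2 ≤ ⟪x - y, B x - B y⟫

theorem IsCocoerciveOn.isNonexpansiveOp_id_sub_smul {β : ℝ} {C : H → H} (hβ : 0 ≤ β)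
    (hC : IsCocoerciveOn β C Set.univ) : IsNonexpansiveOp fun x => x - (2 * β) • C x := by
  intro x y
  have hcoc := hC x trivial y trivial
  have hsq : ‖(x - (2 * β) • C x) - (y - (2 * β) • C y)‖ ^ 2
      = ‖x - y‖ ^ 2 - 4 * β * ⟪x - y, C x - C y⟫ + 4 * β ^ 2 * ‖C x - C y‖ ^ 2 := by
    rw [show (x - (2 * β) • C x) - (y - (2 * β) • C y) = (x - y) - (2 * β) • (C x - C y) by
      module, norm_sub_sq_real, norm_smul, real_inner_smul_right, Real.norm_eq_abs,
      abs_of_nonneg (by positivity : 0 ≤ 2 * β)]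
    ring
  refine le_of_pow_le_pow_left₀ two_ne_zero (norm_nonneg _) ?_
  rw [hsq]
  nlinarith [mul_le_mul_of_nonneg_left hcoc hβ]

theorem isAveragedOp_id_sub_smul {C : H → H} {μ : ℝ} (hμ : μ ≠ 0)
    (hR : IsNonexpansiveOp fun x => x - μ • C x) (γ : ℝ) :
    IsAveragedOp (γ / μ) fun x => x - γ • C x := by
  refine ⟨_, hR, fun x => ?_⟩
  rw [smul_sub, smul_smul, div_mul_cancel₀ γ hμ]
  module

theorem IsCocoerciveOn.starProjection_comp (V : Submodule ℝ H) [V.HasOrthogonalProjection]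
    {β : ℝ} {B : H → H} (hβ : 0 ≤ β) (hB : IsCocoerciveOn β B V) :
    IsCocoerciveOn β (fun x => V.starProjection (B (V.starProjection x))) Set.univ := by
  intro x _ y _
  simp only [← map_sub]
  set d := B (V.starProjection x) - B (V.starProjection y)
  calc β * ‖V.starProjection d‖ ^ 2
      ≤ β * ‖d‖ ^ 2 := by gcongr; exact V.norm_starProjection_apply_le d
    _ ≤ ⟪V.starProjection x - V.starProjection y, d⟫ :=
      hB _ (V.starProjection_apply_mem x) _ (V.starProjection_apply_mem y)
    _ = ⟪x - y, V.starProjection d⟫ := by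
      rw [← map_sub, V.inner_starProjection_left_eq_right]

theorem statement6_general
    (V : Submodule ℝ H) (hV : IsClosed (V : Set H))
    (P : H → H) (hP : ∀ x : H, P x ∈ V ∧ x - P x ∈ Vᗮ)
    (β : ℝ) (hβ : 0 < β)
    (B : H → H)
    (hB : ∀ x ∈ V, ∀ y ∈ V, β * ‖B x - B y‖ ^ 2 ≤ ⟪x - y, B x - B y⟫)
    (γ : ℝ)
    (Sγ : H → H) (hS : ∀ w : H, Sγ w = w - γ • P (B (P w))) :
    IsAveragedOp (γ / (2 * β)) Sγ := by
  have : CompleteSpace V := hV.completeSpace_coe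
  obtain rfl : P = V.starProjection :=
    funext fun x => (V.eq_starProjection_of_mem_orthogonal (hP x).1 (hP x).2).symm
  obtain rfl : Sγ = fun w => w - γ • V.starProjection (B (V.starProjection w)) := funext hS
  exact isAveragedOp_id_sub_smul (by positivity)
    ((IsCocoerciveOn.starProjection_comp V hβ.le hB).isNonexpansiveOp_id_sub_smul hβ.le) γ

theorem statement6
    (V : Submodule ℝ H) (hV : IsClosed (V : Set H))
    (P : H → H) (hP : ∀ x : H, P x ∈ V ∧ x - P x ∈ Vᗮ)
    (β : ℝ) (hβ : 0 < β)
    (B : H → H)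
    (hB : ∀ x ∈ V, ∀ y ∈ V, β * ‖B x - B y‖ ^ 2 ≤ ⟪x - y, B x - B y⟫)
    (γ : ℝ) (hγ : γ ∈ Set.Ioo (0 : ℝ) (2 * β))
    (Sγ : H → H) (hS : ∀ w : H, Sγ w = w - γ • P (B (P w))) :
    IsAveragedOp (γ / (2 * β)) Sγ :=
  statement6_general V hV P hP β hβ B hB γ Sγ hS
end

section
/- Let H be a real Hilbert space, V a closed vector subspace of H, A : H → 2^H maximally monotone, B : H → H β-cocoercive on V for some β > 0, and let γ ∈ (0, 2β). Define T_γ = ½(Id + R_{γA}∘R_{N_V}) and S_γ = Id − γ P_V∘B∘P_V. Then for every x ∈ H, one has 0 ∈ Ax + Bx + N_V x if and only if x ∈ V and there exists y ∈ V⊥ ∩ (Ax + Bx) such that x − γ(y − P_{V⊥}(Bx)) is a fixed point of T_γ∘S_γ. -/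
open Filter Topology
open scoped RealInnerProductSpace Pointwise

variable {H : Type*} [NormedAddCommGroup H] [InnerProductSpace ℝ H] [CompleteSpace H]

/-!
Write `z = x - γ (y - P_{V⊥} B x)`. Then `P_V z = x`, and the reflection
`R_{N_V} (S_γ z) = 2 P_V (S_γ z) - S_γ z` equals `x + γ (y - B x)`, where `y - B x ∈ A x`;
so the resolvent sends it back to `x`, which forces `T_γ (S_γ z) = z`.
Conversely, `w = -y` is a normal vector at `x ∈ V` with `u + B x + w = 0`.
-/

section

variable {E : Type*} [NormedAddCommGroup E] [InnerProductSpace ℝ E]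

theorem proj_eq_of_mem_of_sub_mem_orthogonal {V : Submodule ℝ E} {P : E → E}
    (hP : ∀ x : E, P x ∈ V ∧ x - P x ∈ Vᗮ) {a p : E} (hp : p ∈ V) (hap : a - p ∈ Vᗮ) :
    P a = p := by
  have hV : P a - p ∈ V := sub_mem (hP a).1 hp
  have hVperp : P a - p ∈ Vᗮ := by
    simpa using sub_mem hap (hP a).2
  exact sub_eq_zero.1 ((Submodule.orthogonal_disjoint V).le_bot ⟨hV, hVperp⟩)

theorem resolvent_add_smul_eq {A : E → Set E} {γ : ℝ} {J : E → E}
    (hJ : ∀ x p : E, J x = p ↔ ∃ u ∈ A p, x - p = γ • u) {p u : E} (hu : u ∈ A p) :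
    J (p + γ • u) = p :=
  (hJ _ _).2 ⟨u, hu, by simp⟩

theorem douglasRachford_apply {P J T : E → E}
    (hT : ∀ w : E, T w = (2 : ℝ)⁻¹ • (w + ((2 : ℝ) • J ((2 : ℝ) • P w - w) - ((2 : ℝ) • P w - w))))
    (w : E) : T w = w - P w + J ((2 : ℝ) • P w - w) := by
  rw [hT]
  module

theorem douglasRachford_forwardBackward_fixed {V : Submodule ℝ E} {P : E → E}
    (hP : ∀ x : E, P x ∈ V ∧ x - P x ∈ Vᗮ) {A : E → Set E} {B : E → E} {γ : ℝ}
    {J : E → E} (hJ : ∀ x p : E, J x = p ↔ ∃ u ∈ A p, x - p = γ • u) {T S : E → E}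
    (hT : ∀ w : E, T w = (2 : ℝ)⁻¹ • (w + ((2 : ℝ) • J ((2 : ℝ) • P w - w) - ((2 : ℝ) • P w - w))))
    (hS : ∀ w : E, S w = w - γ • P (B (P w)))
    {x y u : E} (hx : x ∈ V) (hy : y ∈ Vᗮ) (hu : u ∈ A x) (hyu : y = u + B x) :
    T (S (x - γ • (y - (B x - P (B x))))) = x - γ • (y - (B x - P (B x))) := by
  set z := x - γ • (y - (B x - P (B x))) with hz
  have hzx : z - x ∈ Vᗮ := by
    have hperp : γ • (y - (B x - P (B x))) ∈ Vᗮ :=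
      Submodule.smul_mem _ _ (sub_mem hy (hP (B x)).2)
    simpa [hz] using neg_mem hperp
  have hPz : P z = x := proj_eq_of_mem_of_sub_mem_orthogonal hP hx hzx
  have hSz : S z = z - γ • P (B x) := by rw [hS, hPz]
  have hPSz : P (S z) = x - γ • P (B x) :=
    proj_eq_of_mem_of_sub_mem_orthogonal hP (sub_mem hx (Submodule.smul_mem _ _ (hP (B x)).1))
      (by simpa [hSz] using hzx)
  have hreflect : (2 : ℝ) • P (S z) - S z = x + γ • u := by
    rw [hPSz, hSz, hz, hyu]
    module
  rw [douglasRachford_apply hT, hreflect, resolvent_add_smul_eq hJ hu, hPSz, hSz]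
  abel

end

theorem statement7_general
    (V : Submodule ℝ H)
    (P : H → H) (hP : ∀ x : H, P x ∈ V ∧ x - P x ∈ Vᗮ)
    (A : H → Set H)
    (B : H → H)
    (γ : ℝ)
    (J : H → H) (hJ : ∀ x p : H, J x = p ↔ ∃ u ∈ A p, x - p = γ • u)
    (Tγ : H → H)
    (hT : ∀ w : H, Tγ w =
      (2 : ℝ)⁻¹ • (w + ((2 : ℝ) • J ((2 : ℝ) • P w - w) - ((2 : ℝ) • P w - w))))
    (Sγ : H → H) (hS : ∀ w : H, Sγ w = w - γ • P (B (P w))) :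
    ∀ x : H,
      (∃ u ∈ A x, ∃ w ∈ normalConeSub V x, u + B x + w = 0) ↔
      (x ∈ V ∧ ∃ y : H, y ∈ Vᗮ ∧ (∃ u ∈ A x, y = u + B x) ∧
        Tγ (Sγ (x - γ • (y - (B x - P (B x))))) = x - γ • (y - (B x - P (B x)))) := by
  intro x
  constructor
  · rintro ⟨u, hu, w, ⟨hx, hw⟩, hsum⟩
    have hyu : -w = u + B x := by linear_combination (norm := module) -hsum
    exact ⟨hx, -w, neg_mem hw, ⟨u, hu, hyu⟩,
      douglasRachford_forwardBackward_fixed hP hJ hT hS hx (neg_mem hw) hu hyu⟩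
  · rintro ⟨hx, y, hy, ⟨u, hu, hyu⟩, -⟩
    exact ⟨u, hu, -y, ⟨hx, neg_mem hy⟩, by rw [hyu]; abel⟩

theorem statement7
    (V : Submodule ℝ H) (hV : IsClosed (V : Set H))
    (P : H → H) (hP : ∀ x : H, P x ∈ V ∧ x - P x ∈ Vᗮ)
    (A : H → Set H) (hA : IsMaxMonotoneOp A)
    (β : ℝ) (hβ : 0 < β)
    (B : H → H)
    (hB : ∀ x ∈ V, ∀ y ∈ V, β * ‖B x - B y‖ ^ 2 ≤ ⟪x - y, B x - B y⟫)
    (γ : ℝ) (hγ : γ ∈ Set.Ioo (0 : ℝ) (2 * β))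
    (J : H → H) (hJ : ∀ x p : H, J x = p ↔ ∃ u ∈ A p, x - p = γ • u)
    (Tγ : H → H)
    (hT : ∀ w : H, Tγ w =
      (2 : ℝ)⁻¹ • (w + ((2 : ℝ) • J ((2 : ℝ) • P w - w) - ((2 : ℝ) • P w - w))))
    (Sγ : H → H) (hS : ∀ w : H, Sγ w = w - γ • P (B (P w))) :
    ∀ x : H,
      (∃ u ∈ A x, ∃ w ∈ normalConeSub V x, u + B x + w = 0) ↔
      (x ∈ V ∧ ∃ y : H, y ∈ Vᗮ ∧ (∃ u ∈ A x, y = u + B x) ∧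
        Tγ (Sγ (x - γ • (y - (B x - P (B x))))) = x - γ • (y - (B x - P (B x)))) :=
  statement7_general V P hP A B γ J hJ Tγ hT Sγ hS
end

section
/- Let H be a real Hilbert space, V a closed vector subspace of H, A : H → 2^H maximally monotone, B : H → H β-cocoercive on V for some β > 0, and let γ > 0. Define 𝒜_γ = (γA)_V, the partial inverse of γA with respect to V, and ℬ_γ = γ P_V∘B∘P_V. Then for every x ∈ H, one has 0 ∈ Ax + Bx + N_V x if and only if x ∈ V and there exists y ∈ V⊥ ∩ (Ax + Bx) such that 0 ∈ 𝒜_γ(x + γ(y − P_{V⊥}(Bx))) + ℬ_γ(x + γ(y − P_{V⊥}(Bx))). -/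
open Filter Topology
open scoped RealInnerProductSpace Pointwise

variable {H : Type*} [NormedAddCommGroup H] [InnerProductSpace ℝ H] [CompleteSpace H]

/-! With `y = u + Bx = -w ∈ Vᗮ`, the point `x + γ(y - P_{V⊥}Bx)` splits as `x ∈ V` plus a
vector of `Vᗮ`, so the partial inverse of `γA` there is read off from `γA x`: the zero is
`v = -γ P_V(Bx)`, because `v + γ(y - P_{V⊥}Bx) = γu ∈ γA x`. -/

section OrthogonalProjection

variable {E : Type*} [NormedAddCommGroup E] [InnerProductSpace ℝ E]
  {V : Submodule ℝ E} {P : E → E} (hP : ∀ x : E, P x ∈ V ∧ x - P x ∈ Vᗮ)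
include hP

theorem proj_add_eq_of_mem_of_mem_orthogonal {a b : E} (ha : a ∈ V) (hb : b ∈ Vᗮ) :
    P (a + b) = a := by
  have hdiff : P (a + b) - a = b - (a + b - P (a + b)) := by abel
  have hmem : P (a + b) - a ∈ V := sub_mem (hP _).1 ha
  have hmem_orth : P (a + b) - a ∈ Vᗮ := hdiff ▸ sub_mem hb (hP _).2
  exact sub_eq_zero.mp (Submodule.disjoint_def.mp V.orthogonal_disjoint _ hmem hmem_orth)

theorem proj_eq_self_of_mem {a : E} (ha : a ∈ V) : P a = a := by
  simpa using proj_add_eq_of_mem_of_mem_orthogonal hP ha (zero_mem Vᗮ)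

theorem mem_partialInvOp_add_iff {M : E → Set E} {x z v : E}
    (hx : x ∈ V) (hz : z ∈ Vᗮ) (hv : v ∈ V) :
    v ∈ partialInvOp P M (x + z) ↔ v + z ∈ M x := by
  simp only [partialInvOp, Set.mem_ofPred_eq, proj_add_eq_of_mem_of_mem_orthogonal hP hx hz,
    proj_eq_self_of_mem hP hv, add_sub_cancel_left, sub_self, add_zero]

end OrthogonalProjection

theorem statement11_general
    (V : Submodule ℝ H)
    (P : H → H) (hP : ∀ x : H, P x ∈ V ∧ x - P x ∈ Vᗮ)
    (A : H → Set H)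
    (B : H → H)
    (γ : ℝ) :
    ∀ x : H,
      (∃ u ∈ A x, ∃ w ∈ normalConeSub V x, u + B x + w = 0) ↔
      (x ∈ V ∧ ∃ y : H, y ∈ Vᗮ ∧ (∃ u ∈ A x, y = u + B x) ∧
        ∃ v ∈ partialInvOp P (fun w => γ • A w) (x + γ • (y - (B x - P (B x)))),
          v + γ • P (B (P (x + γ • (y - (B x - P (B x)))))) = 0) := by
  intro x
  constructor
  · rintro ⟨u, hu, w, ⟨hxV, hw⟩, hsum⟩
    have hy : u + B x ∈ Vᗮ := by
      rw [eq_neg_of_add_eq_zero_left hsum]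
      exact neg_mem hw
    have hz : γ • (u + B x - (B x - P (B x))) ∈ Vᗮ := Vᗮ.smul_mem γ (sub_mem hy (hP _).2)
    have hv : -(γ • P (B x)) ∈ V := neg_mem (V.smul_mem γ (hP _).1)
    refine ⟨hxV, u + B x, hy, ⟨u, hu, rfl⟩, -(γ • P (B x)), ?_, ?_⟩
    · rw [mem_partialInvOp_add_iff hP hxV hz hv]
      convert Set.smul_mem_smul_set (a := γ) hu using 1
      module
    · rw [proj_add_eq_of_mem_of_mem_orthogonal hP hxV hz, neg_add_cancel]
  · rintro ⟨hxV, y, hy, ⟨u, hu, rfl⟩, -⟩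
    exact ⟨u, hu, -(u + B x), ⟨hxV, neg_mem hy⟩, add_neg_cancel _⟩

theorem statement11
    (V : Submodule ℝ H) (hV : IsClosed (V : Set H))
    (P : H → H) (hP : ∀ x : H, P x ∈ V ∧ x - P x ∈ Vᗮ)
    (A : H → Set H) (hA : IsMaxMonotoneOp A)
    (β : ℝ) (hβ : 0 < β)
    (B : H → H)
    (hB : ∀ x ∈ V, ∀ y ∈ V, β * ‖B x - B y‖ ^ 2 ≤ ⟪x - y, B x - B y⟫)
    (γ : ℝ) (hγ : 0 < γ) :
    ∀ x : H,
      (∃ u ∈ A x, ∃ w ∈ normalConeSub V x, u + B x + w = 0) ↔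
      (x ∈ V ∧ ∃ y : H, y ∈ Vᗮ ∧ (∃ u ∈ A x, y = u + B x) ∧
        ∃ v ∈ partialInvOp P (fun w => γ • A w) (x + γ • (y - (B x - P (B x)))),
          v + γ • P (B (P (x + γ • (y - (B x - P (B x)))))) = 0) :=
  statement11_general V P hP A B γ
end

section
/- Let H be a real Hilbert space, V a closed vector subspace of H, A : H → 2^H maximally monotone, B : H → H β-cocoercive on V for some β > 0, let Z denote the set of solutions of 0 ∈ Ax + Bx + N_V x, and let γ ∈ (0, 2β). Define T_γ = ½(Id + R_{γA}∘R_{N_V}), S_γ = Id − γ P_V∘B∘P_V, 𝒜_γ = (γA)_V (the partial inverse of γA with respect to V), and ℬ_γ = γ P_V∘B∘P_V. Then Z = P_V(Fix(T_γ∘S_γ)) = P_V(zer(𝒜_γ + ℬ_γ)) and R_{N_V}(Fix(T_γ∘S_γ)) = zer(𝒜_γ + ℬ_γ), where zer(𝒜_γ + ℬ_γ) = {z ∈ H : 0 ∈ 𝒜_γ z + ℬ_γ z}. -/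
open Filter Topology
open scoped RealInnerProductSpace Pointwise

variable {H : Type*} [NormedAddCommGroup H] [InnerProductSpace ℝ H] [CompleteSpace H]

/-! Everything is read off in the decomposition `w = P w + (w - P w)` along `V ⊕ Vᗮ`.
With `R = 2P - id`, the point `w` is fixed by `T_γ ∘ S_γ` iff `R w` is a zero of `𝒜_γ + ℬ_γ`,
and `w` is such a zero iff some `u ∈ A (P w)` has `γ (u + P (B (P w))) = w - P w`; the `Vᗮ`-part
of `w` then supplies the normal vector in `0 ∈ A x + B x + N_V x`. Since `R` is an involution
and `P ∘ R = P`, the three identities follow. -/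

section PartialInverse

omit [CompleteSpace H]

variable {V : Submodule ℝ H} {P : H → H}

theorem proj_add_of_mem_orthogonal (hP : ∀ x : H, P x ∈ V ∧ x - P x ∈ Vᗮ) {v u : H}
    (hv : v ∈ V) (hu : u ∈ Vᗮ) : P (v + u) = v := by
  have hV : P (v + u) - v ∈ V := sub_mem (hP (v + u)).1 hv
  have hVperp : P (v + u) - v ∈ Vᗮ := by
    have h : P (v + u) - v = u - (v + u - P (v + u)) := by abel
    exact h ▸ sub_mem hu (hP (v + u)).2
  exact sub_eq_zero.mp (inner_self_eq_zero.mp ((Submodule.mem_orthogonal _ _).mp hVperp _ hV))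

theorem proj_eq_self_of_mem_s12 (hP : ∀ x : H, P x ∈ V ∧ x - P x ∈ Vᗮ) {v : H} (hv : v ∈ V) :
    P v = v := by
  simpa using proj_add_of_mem_orthogonal hP hv (zero_mem Vᗮ)

def reflection (P : H → H) (w : H) : H := (2 : ℝ) • P w - w

theorem proj_reflection (hP : ∀ x : H, P x ∈ V ∧ x - P x ∈ Vᗮ) (w : H) :
    P (reflection P w) = P w := by
  have h := proj_add_of_mem_orthogonal hP (hP w).1 (neg_mem (hP w).2)
  rwa [show P w + -(w - P w) = reflection P w by unfold reflection; module] at h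

theorem reflection_involutive (hP : ∀ x : H, P x ∈ V ∧ x - P x ∈ Vᗮ) :
    Function.Involutive (reflection P) := by
  intro w
  rw [reflection, proj_reflection hP, reflection]
  module

variable {A : H → Set H} {B : H → H} {γ : ℝ}

theorem exists_partialInvOp_add_eq_zero_iff (hP : ∀ x : H, P x ∈ V ∧ x - P x ∈ Vᗮ) (w : H) :
    (∃ v ∈ partialInvOp P (fun w' => γ • A w') w, v + γ • P (B (P w)) = 0) ↔
      ∃ u ∈ A (P w), γ • u + γ • P (B (P w)) = w - P w := by
  have hv : -(γ • P (B (P w))) ∈ V := neg_mem (V.smul_mem γ (hP _).1)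
  constructor
  · rintro ⟨v, hvA, hv0⟩
    obtain rfl : v = -(γ • P (B (P w))) := eq_neg_of_add_eq_zero_left hv0
    obtain ⟨u, hu, hγu⟩ : ∃ u ∈ A (P w), γ • u = -(γ • P (B (P w))) + (w - P w) := by
      simpa only [partialInvOp, proj_eq_self_of_mem_s12 hP hv, sub_self, add_zero,
        Set.mem_ofPred_eq, Set.mem_smul_set] using hvA
    exact ⟨u, hu, by rw [hγu]; abel⟩
  · rintro ⟨u, hu, hγu⟩
    refine ⟨-(γ • P (B (P w))), ?_, neg_add_cancel _⟩
    simp only [partialInvOp, proj_eq_self_of_mem_s12 hP hv, sub_self, add_zero, Set.mem_ofPred_eq]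
    rw [show -(γ • P (B (P w))) + (w - P w) = γ • u by rw [← hγu]; abel]
    exact Set.smul_mem_smul_set hu

theorem forwardDouglasRachford_apply_eq_self_iff (hP : ∀ x : H, P x ∈ V ∧ x - P x ∈ Vᗮ)
    {J Tγ Sγ : H → H}
    (hJ : ∀ x p : H, J x = p ↔ ∃ u ∈ A p, x - p = γ • u)
    (hT : ∀ w : H, Tγ w =
      (2 : ℝ)⁻¹ • (w + ((2 : ℝ) • J ((2 : ℝ) • P w - w) - ((2 : ℝ) • P w - w))))
    (hS : ∀ w : H, Sγ w = w - γ • P (B (P w))) (w : H) :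
    Tγ (Sγ w) = w ↔ ∃ u ∈ A (P w), γ • u + γ • P (B (P w)) = -(w - P w) := by
  set s := w - γ • P (B (P w))
  have hPs : P s = P w - γ • P (B (P w)) := by
    have h := proj_add_of_mem_orthogonal hP (sub_mem (hP w).1 (V.smul_mem γ (hP (B (P w))).1))
      (hP w).2
    rwa [show P w - γ • P (B (P w)) + (w - P w) = s by module] at h
  -- `½ (Id + R_{γA}) = J`, so `T_γ = J ∘ R_{N_V} + P_{V⊥}`, and `S_γ` leaves the `Vᗮ`-part alone.
  have hTs : Tγ s = J ((2 : ℝ) • P s - s) + (w - P w) := by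
    rw [hT, show w - P w = s - P s by rw [hPs]; module]
    module
  have hJs : Tγ s = w ↔ J ((2 : ℝ) • P s - s) = P w := by
    rw [hTs]
    constructor <;> intro h
    · rw [← sub_eq_iff_eq_add.mpr h.symm, sub_sub_cancel]
    · rw [h, add_sub_cancel]
  rw [hS, hJs, hJ, show (2 : ℝ) • P s - s - P w = -(γ • P (B (P w))) - (w - P w) by
    rw [hPs]; module]
  refine exists_congr fun u => and_congr_right fun _ => ⟨fun h => ?_, fun h => ?_⟩
  · rw [← h]; module
  · rw [eq_sub_of_add_eq h]; module

theorem exists_mem_add_normalConeSub_eq_zero_iff (hP : ∀ x : H, P x ∈ V ∧ x - P x ∈ Vᗮ)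
    (hγ : γ ≠ 0) (x : H) :
    (∃ u ∈ A x, ∃ n ∈ normalConeSub V x, u + B x + n = 0) ↔
      ∃ w, (∃ u ∈ A (P w), γ • u + γ • P (B (P w)) = w - P w) ∧ P w = x := by
  constructor
  · rintro ⟨u, hu, n, ⟨hx, hn⟩, hsum⟩
    have hperp : u + P (B x) ∈ Vᗮ := by
      rw [show u + P (B x) = -n - (B x - P (B x)) by
        rw [eq_sub_of_add_eq (eq_neg_of_add_eq_zero_left hsum)]; abel]
      exact sub_mem (neg_mem hn) (hP _).2
    have hPw : P (x + γ • (u + P (B x))) = x :=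
      proj_add_of_mem_orthogonal hP hx (Vᗮ.smul_mem γ hperp)
    refine ⟨x + γ • (u + P (B x)), ⟨u, ?_, ?_⟩, hPw⟩ <;> rw [hPw]
    · exact hu
    · module
  · rintro ⟨w, ⟨u, hu, hγu⟩, rfl⟩
    refine ⟨u, hu, -(u + B (P w)), ⟨(hP w).1, ?_⟩, by abel⟩
    rw [← Submodule.smul_mem_iff _ hγ, show γ • -(u + B (P w)) =
        -(w - P w) - γ • (B (P w) - P (B (P w))) by rw [← hγu]; module]
    exact sub_mem (neg_mem (hP w).2) (Vᗮ.smul_mem γ (hP _).2)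

end PartialInverse

theorem statement12_general
    (V : Submodule ℝ H)
    (P : H → H) (hP : ∀ x : H, P x ∈ V ∧ x - P x ∈ Vᗮ)
    (A : H → Set H)
    (β : ℝ)
    (B : H → H)
    (γ : ℝ) (hγ : γ ∈ Set.Ioo (0 : ℝ) (2 * β))
    (J : H → H) (hJ : ∀ x p : H, J x = p ↔ ∃ u ∈ A p, x - p = γ • u)
    (Tγ : H → H)
    (hT : ∀ w : H, Tγ w =
      (2 : ℝ)⁻¹ • (w + ((2 : ℝ) • J ((2 : ℝ) • P w - w) - ((2 : ℝ) • P w - w))))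
    (Sγ : H → H) (hS : ∀ w : H, Sγ w = w - γ • P (B (P w)))
    (Z : Set H) (hZ : Z = {x | ∃ u ∈ A x, ∃ w ∈ normalConeSub V x, u + B x + w = 0}) :
    Z = P '' {w | Tγ (Sγ w) = w} ∧
    Z = P '' {w | ∃ v ∈ partialInvOp P (fun w' => γ • A w') w, v + γ • P (B (P w)) = 0} ∧
    (fun w => (2 : ℝ) • P w - w) '' {w | Tγ (Sγ w) = w} =
      {w | ∃ v ∈ partialInvOp P (fun w' => γ • A w') w, v + γ • P (B (P w)) = 0} := by
  set zeros := {w | ∃ v ∈ partialInvOp P (fun w' => γ • A w') w, v + γ • P (B (P w)) = 0}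
  have hfix : {w | Tγ (Sγ w) = w} = reflection P ⁻¹' zeros := by
    ext w
    have hR : reflection P w - P w = -(w - P w) := by rw [reflection]; module
    simp only [Set.mem_ofPred_eq, Set.mem_preimage, zeros, proj_reflection hP, hR,
      forwardDouglasRachford_apply_eq_self_iff hP hJ hT hS, exists_partialInvOp_add_eq_zero_iff hP]
  have hreflect : reflection P '' {w | Tγ (Sγ w) = w} = zeros := by
    rw [hfix, Set.image_preimage_eq _ (reflection_involutive hP).surjective]
  have hZzeros : Z = P '' zeros := by
    ext x
    simp only [hZ, Set.mem_ofPred_eq, Set.mem_image, zeros, exists_partialInvOp_add_eq_zero_iff hP,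
      exists_mem_add_normalConeSub_eq_zero_iff hP hγ.1.ne']
  have hPfix : P '' {w | Tγ (Sγ w) = w} = P '' zeros := by
    rw [← hreflect, Set.image_image, funext (proj_reflection hP)]
  exact ⟨hZzeros.trans hPfix.symm, hZzeros, hreflect⟩

theorem statement12
    (V : Submodule ℝ H) (hV : IsClosed (V : Set H))
    (P : H → H) (hP : ∀ x : H, P x ∈ V ∧ x - P x ∈ Vᗮ)
    (A : H → Set H) (hA : IsMaxMonotoneOp A)
    (β : ℝ) (hβ : 0 < β)
    (B : H → H)
    (hB : ∀ x ∈ V, ∀ y ∈ V, β * ‖B x - B y‖ ^ 2 ≤ ⟪x - y, B x - B y⟫)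
    (γ : ℝ) (hγ : γ ∈ Set.Ioo (0 : ℝ) (2 * β))
    (J : H → H) (hJ : ∀ x p : H, J x = p ↔ ∃ u ∈ A p, x - p = γ • u)
    (Tγ : H → H)
    (hT : ∀ w : H, Tγ w =
      (2 : ℝ)⁻¹ • (w + ((2 : ℝ) • J ((2 : ℝ) • P w - w) - ((2 : ℝ) • P w - w))))
    (Sγ : H → H) (hS : ∀ w : H, Sγ w = w - γ • P (B (P w)))
    (Z : Set H) (hZ : Z = {x | ∃ u ∈ A x, ∃ w ∈ normalConeSub V x, u + B x + w = 0}) :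
    Z = P '' {w | Tγ (Sγ w) = w} ∧
    Z = P '' {w | ∃ v ∈ partialInvOp P (fun w' => γ • A w') w, v + γ • P (B (P w)) = 0} ∧
    (fun w => (2 : ℝ) • P w - w) '' {w | Tγ (Sγ w) = w} =
      {w | ∃ v ∈ partialInvOp P (fun w' => γ • A w') w, v + γ • P (B (P w)) = 0} :=
  statement12_general V P hP A β B γ hγ J hJ Tγ hT Sγ hS Z hZ
end

section
/- Let H be a real Hilbert space, V a closed vector subspace of H, A : H → 2^H maximally monotone, B : H → H β-cocoercive on V for some β > 0, and assume the set Z of solutions of 0 ∈ Ax + Bx + N_V x is nonempty. Let γ ∈ (0, 2β), let ε ∈ (0,1), let (λ_n) be a sequence in [ε, 1], let x_0 ∈ V, y_0 ∈ V⊥, and for every n ∈ ℕ set s_n = x_n − γ P_V(Bx_n) + γ y_n, p_n = J_{γA} s_n, y_{n+1} = y_n + (λ_n/γ)(P_V p_n − p_n), and x_{n+1} = x_n + λ_n(P_V p_n − x_n). Then x_n ∈ V and y_n ∈ V⊥ for all n, and there exist x̄ ∈ Z and ȳ ∈ V⊥ ∩ (Ax̄ + P_V(Bx̄)) such that: x_n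 converges weakly to x̄, y_n converges weakly to ȳ, x_{n+1} − x_n → 0 and y_{n+1} − y_n → 0 strongly, and P_V(Bx_n) converges strongly to P_V(Bx̄). -/
open Filter Topology
open scoped RealInnerProductSpace Pointwise

variable {H : Type*} [NormedAddCommGroup H] [InnerProductSpace ℝ H] [CompleteSpace H]

/-!
Put `z n = x n + γ • y n`. Then `z` is a Krasnosel'skiĭ–Mann iteration
`z (n + 1) = z n + λ n • (T (z n) - z n)` of the forward-backward operator
`T = Q ∘ (id - γ C)`, where `C = P_V ∘ B ∘ P_V` is `β`-cocoercive and
`Q = P_V ∘ J + P_{V⊥} ∘ (id - J)` is the resolvent of Spingarn's partial inverse of `γ A`, hence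
firmly nonexpansive. The fixed points of `T` are the points `x + γ y` with `x ∈ V`, `y ∈ V⊥` and
`y ∈ A x + P_V (B x)`, so they correspond to `Z`. The forward-backward estimate makes `z` Fejér
monotone with respect to `Fix T`, with decrements controlling `‖C (z n) - C c‖²` and
`‖T (z n) - z n + γ (C (z n) - C c)‖²`; hence `C (z n)` converges strongly and
`T (z n) - z n → 0`. Demiclosedness of `id - T` and Opial's lemma give weak convergence of `z`,
and projecting onto `V` and `V⊥` recovers `x` and `y`.
-/

theorem Antitone.exists_tendsto_of_nonneg {a : ℕ → ℝ} (h : Antitone a) (ha : ∀ n, 0 ≤ a n) :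
    ∃ L, Tendsto a atTop (𝓝 L) :=
  ⟨_, tendsto_atTop_ciInf h ⟨0, by rintro _ ⟨n, rfl⟩; exact ha n⟩⟩

theorem tendsto_zero_of_succ_add_le {a d : ℕ → ℝ} (ha : ∀ n, 0 ≤ a n) (hd : ∀ n, 0 ≤ d n)
    (h : ∀ n, a (n + 1) + d n ≤ a n) : Tendsto d atTop (𝓝 0) := by
  obtain ⟨L, hL⟩ :=
    (antitone_nat_of_succ_le fun n => by linarith [h n, hd n]).exists_tendsto_of_nonneg ha
  have hgap : Tendsto (fun n => a n - a (n + 1)) atTop (𝓝 0) := by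
    simpa using hL.sub (hL.comp (tendsto_add_atTop_nat 1))
  exact squeeze_zero hd (fun n => by linarith [h n]) hgap

section

variable {E : Type*} [NormedAddCommGroup E]

theorem tendsto_zero_of_norm_sq_le {v : ℕ → E} {d : ℕ → ℝ} (K : ℝ)
    (h : ∀ n, ‖v n‖ ^ 2 ≤ K * d n) (hd : Tendsto d atTop (𝓝 0)) : Tendsto v atTop (𝓝 0) := by
  have hsq : Tendsto (fun n => ‖v n‖ ^ 2) atTop (𝓝 0) :=
    squeeze_zero (fun n => sq_nonneg _) h (by simpa using hd.const_mul K)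
  rw [tendsto_zero_iff_norm_tendsto_zero]
  simpa [Real.sqrt_sq (norm_nonneg _)] using hsq.sqrt

variable [InnerProductSpace ℝ E]

section Projection

variable (V : Submodule ℝ E) [V.HasOrthogonalProjection]

theorem inner_eq_inner_starProjection_add (e f : E) :
    ⟪e, f⟫ = ⟪V.starProjection e, V.starProjection f⟫
      + ⟪Vᗮ.starProjection e, Vᗮ.starProjection f⟫ := by
  conv_lhs => rw [← V.starProjection_add_starProjection_orthogonal e,
    ← V.starProjection_add_starProjection_orthogonal f]
  have h₁ := V.inner_right_of_mem_orthogonal (V.starProjection_apply_mem e)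
    (Vᗮ.starProjection_apply_mem f)
  have h₂ := V.inner_left_of_mem_orthogonal (V.starProjection_apply_mem f)
    (Vᗮ.starProjection_apply_mem e)
  simp only [inner_add_left, inner_add_right, h₁, h₂]
  ring

theorem inner_starProjection_add_orthogonal_swap (e f : E) :
    ⟪V.starProjection e + Vᗮ.starProjection f, V.starProjection f + Vᗮ.starProjection e⟫
      = ⟪e, f⟫ := by
  have h₁ := V.inner_right_of_mem_orthogonal (V.starProjection_apply_mem e)
    (Vᗮ.starProjection_apply_mem e)
  have h₂ := V.inner_left_of_mem_orthogonal (V.starProjection_apply_mem f)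
    (Vᗮ.starProjection_apply_mem f)
  rw [inner_eq_inner_starProjection_add V e f]
  simp only [inner_add_left, inner_add_right, h₁, h₂,
    real_inner_comm (Vᗮ.starProjection e) (Vᗮ.starProjection f)]
  ring

end Projection

section FirmlyNonexpansive

def FirmlyNonexpansive (T : E → E) : Prop :=
  ∀ a b, 0 ≤ ⟪T a - T b, (a - T a) - (b - T b)⟫

theorem FirmlyNonexpansive.norm_sq_add_norm_sq_le {T : E → E} (hT : FirmlyNonexpansive T)
    (a b : E) : ‖T a - T b‖ ^ 2 + ‖(a - T a) - (b - T b)‖ ^ 2 ≤ ‖a - b‖ ^ 2 := by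
  have h : a - b = (T a - T b) + ((a - T a) - (b - T b)) := by abel
  rw [h, norm_add_sq_real]
  linarith [hT a b]

theorem firmlyNonexpansive_of_resolvent {A : E → Set E} (hA : IsMonotoneOp A) {γ : ℝ}
    (hγ : 0 ≤ γ) {J : E → E} (hJ : ∀ x, ∃ u ∈ A (J x), x - J x = γ • u) :
    FirmlyNonexpansive J := by
  intro a b
  obtain ⟨u, hu, hau⟩ := hJ a
  obtain ⟨v, hv, hbv⟩ := hJ b
  rw [hau, hbv, ← smul_sub, real_inner_smul_right]
  exact mul_nonneg hγ (hA _ _ _ _ hu hv)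

variable (V : Submodule ℝ E) [V.HasOrthogonalProjection] (J : E → E)

/-- The resolvent of the partial inverse, with respect to `V`, of the operator whose resolvent
is `J`. -/
noncomputable def partialResolvent (w : E) : E :=
  V.starProjection (J w) + Vᗮ.starProjection (w - J w)

theorem sub_partialResolvent (w : E) :
    w - partialResolvent V J w = V.starProjection (w - J w) + Vᗮ.starProjection (J w) := by
  simp only [partialResolvent, Submodule.starProjection_orthogonal_val, map_sub]
  abel

theorem partialResolvent_eq_reflection_add (w : E) :
    partialResolvent V J w = V.reflection (J w) + Vᗮ.starProjection w := by
  simp only [partialResolvent, Submodule.reflection_apply, Submodule.starProjection_orthogonal_val,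
    map_sub, two_smul]
  abel

variable {J}

theorem FirmlyNonexpansive.partialResolvent (hJ : FirmlyNonexpansive J) :
    FirmlyNonexpansive (_root_.partialResolvent V J) := by
  -- `(Q, id - Q)` arises from `(J, id - J)` by exchanging `Vᗮ`-components.
  intro a b
  have hdiff : _root_.partialResolvent V J a - _root_.partialResolvent V J b
      = V.starProjection (J a - J b) + Vᗮ.starProjection ((a - J a) - (b - J b)) := by
    simp only [_root_.partialResolvent, Submodule.starProjection_orthogonal_val, map_sub]
    abel
  have hdiff' : (a - _root_.partialResolvent V J a) - (b - _root_.partialResolvent V J b)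
      = V.starProjection ((a - J a) - (b - J b)) + Vᗮ.starProjection (J a - J b) := by
    simp only [sub_partialResolvent, Submodule.starProjection_orthogonal_val, map_sub]
    abel
  rw [hdiff, hdiff', inner_starProjection_add_orthogonal_swap]
  exact hJ a b

end FirmlyNonexpansive

section ForwardBackward

def IsCocoercive (β : ℝ) (C : E → E) : Prop :=
  ∀ a b, β * ‖C a - C b‖ ^ 2 ≤ ⟪a - b, C a - C b⟫

noncomputable def compression (V : Submodule ℝ E) [V.HasOrthogonalProjection] (B : E → E)
    (z : E) : E :=
  V.starProjection (B (V.starProjection z))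

theorem isCocoercive_compression {β : ℝ} (hβ : 0 ≤ β) {V : Submodule ℝ E}
    [V.HasOrthogonalProjection] {B : E → E}
    (hB : ∀ x ∈ V, ∀ y ∈ V, β * ‖B x - B y‖ ^ 2 ≤ ⟪x - y, B x - B y⟫) :
    IsCocoercive β (compression V B) := by
  intro a b
  set d := B (V.starProjection a) - B (V.starProjection b)
  have hdiff : compression V B a - compression V B b = V.starProjection d := by
    simp only [compression, d, map_sub]
  have hinner : ⟪a - b, V.starProjection d⟫ = ⟪V.starProjection a - V.starProjection b, d⟫ := by
    rw [← V.inner_starProjection_left_eq_right, map_sub]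
  rw [hdiff, hinner]
  calc β * ‖V.starProjection d‖ ^ 2 ≤ β * ‖d‖ ^ 2 := by
        gcongr; exact V.norm_starProjection_apply_le d
    _ ≤ _ := hB _ (V.starProjection_apply_mem a) _ (V.starProjection_apply_mem b)

def forwardBackward (Q C : E → E) (γ : ℝ) (z : E) : E :=
  Q (z - γ • C z)

variable {Q C : E → E} {β γ : ℝ}

theorem norm_sq_forwardBackward_sub_le (hQ : FirmlyNonexpansive Q) (hC : IsCocoercive β C)
    (hγ : 0 ≤ γ) (a b : E) :
    ‖forwardBackward Q C γ a - forwardBackward Q C γ b‖ ^ 2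
        + γ * (2 * β - γ) * ‖C a - C b‖ ^ 2
        + ‖(forwardBackward Q C γ a - a) - (forwardBackward Q C γ b - b) + γ • (C a - C b)‖ ^ 2
      ≤ ‖a - b‖ ^ 2 := by
  have h := hQ.norm_sq_add_norm_sq_le (a - γ • C a) (b - γ • C b)
  have hin : (a - γ • C a) - (b - γ • C b) = (a - b) - γ • (C a - C b) := by
    rw [smul_sub]; abel
  have hout : (a - γ • C a - Q (a - γ • C a)) - (b - γ • C b - Q (b - γ • C b))
      = -((forwardBackward Q C γ a - a) - (forwardBackward Q C γ b - b)
        + γ • (C a - C b)) := by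
    simp only [forwardBackward, smul_sub]; abel
  have hexpand : ‖(a - b) - γ • (C a - C b)‖ ^ 2
      = ‖a - b‖ ^ 2 - 2 * (γ * ⟪a - b, C a - C b⟫) + γ ^ 2 * ‖C a - C b‖ ^ 2 := by
    rw [norm_sub_sq_real, real_inner_smul_right, norm_smul, Real.norm_eq_abs, mul_pow, sq_abs]
  rw [hin, hout, norm_neg, hexpand] at h
  have hcoco := mul_le_mul_of_nonneg_left (hC a b) hγ
  simp only [forwardBackward] at h ⊢
  nlinarith

theorem lipschitzWith_one_forwardBackward (hQ : FirmlyNonexpansive Q) (hC : IsCocoercive β C)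
    (hγ : γ ∈ Set.Icc 0 (2 * β)) : LipschitzWith 1 (forwardBackward Q C γ) := by
  refine LipschitzWith.mk_one fun a b => ?_
  rw [dist_eq_norm, dist_eq_norm, ← sq_le_sq₀ (norm_nonneg _) (norm_nonneg _)]
  have h := norm_sq_forwardBackward_sub_le hQ hC hγ.1 a b
  have hγβ : 0 ≤ γ * (2 * β - γ) := mul_nonneg hγ.1 (by linarith [hγ.2])
  nlinarith [mul_nonneg hγβ (sq_nonneg ‖C a - C b‖)]

theorem apply_eq_of_isFixedPt_forwardBackward (hQ : FirmlyNonexpansive Q)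
    (hC : IsCocoercive β C) (hγ : γ ∈ Set.Ioo 0 (2 * β)) {a b : E}
    (ha : Function.IsFixedPt (forwardBackward Q C γ) a)
    (hb : Function.IsFixedPt (forwardBackward Q C γ) b) : C a = C b := by
  have h := norm_sq_forwardBackward_sub_le hQ hC hγ.1.le a b
  rw [ha.eq, hb.eq, sub_self, sub_self, sub_zero, zero_add] at h
  have hγβ : 0 < γ * (2 * β - γ) := mul_pos hγ.1 (by linarith [hγ.2])
  have hle : ‖C a - C b‖ ^ 2 ≤ 0 := by
    nlinarith [sq_nonneg ‖γ • (C a - C b)‖, mul_nonneg hγβ.le (sq_nonneg ‖C a - C b‖)]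
  rw [← sub_eq_zero, ← norm_eq_zero]
  exact pow_eq_zero_iff two_ne_zero |>.1 (le_antisymm hle (sq_nonneg _))

theorem norm_sq_add_smul_sub_le {a c v : E} {D lam ε : ℝ} (h : ‖v - c‖ ^ 2 + D ≤ ‖a - c‖ ^ 2)
    (hD : 0 ≤ D) (hε : 0 ≤ ε) (hlam : lam ∈ Set.Icc ε 1) :
    ‖a + lam • (v - a) - c‖ ^ 2 + ε * D ≤ ‖a - c‖ ^ 2 := by
  have hu : a + lam • (v - a) - c = (a - c) + lam • (v - a) := by abel
  have hv : v - c = (a - c) + (v - a) := by abel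
  rw [hv, norm_add_sq_real] at h
  rw [hu, norm_add_sq_real, real_inner_smul_right, norm_smul, Real.norm_eq_abs, mul_pow, sq_abs]
  obtain ⟨hεlam, hlam1⟩ := hlam
  nlinarith [mul_le_mul_of_nonneg_left h (hε.trans hεlam), mul_nonneg (hε.trans hεlam)
    (mul_nonneg (sub_nonneg.2 hlam1) (sq_nonneg ‖v - a‖)), mul_le_mul_of_nonneg_right hεlam hD]

section Iteration

variable {ε : ℝ} {lam : ℕ → ℝ} {z : ℕ → E} {c : E}

theorem forwardBackward_fejer (hQ : FirmlyNonexpansive Q) (hC : IsCocoercive β C)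
    (hγ : γ ∈ Set.Icc 0 (2 * β)) (hε : 0 ≤ ε) (hlam : ∀ n, lam n ∈ Set.Icc ε 1)
    (hz : ∀ n, z (n + 1) = z n + lam n • (forwardBackward Q C γ (z n) - z n))
    (hc : Function.IsFixedPt (forwardBackward Q C γ) c) (n : ℕ) :
    ‖z (n + 1) - c‖ ^ 2 + ε * (γ * (2 * β - γ) * ‖C (z n) - C c‖ ^ 2
        + ‖forwardBackward Q C γ (z n) - z n + γ • (C (z n) - C c)‖ ^ 2)
      ≤ ‖z n - c‖ ^ 2 := by
  have hγβ : 0 ≤ γ * (2 * β - γ) := mul_nonneg hγ.1 (by linarith [hγ.2])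
  have h := norm_sq_forwardBackward_sub_le hQ hC hγ.1 (z n) c
  rw [hc.eq, sub_self, sub_zero] at h
  rw [hz n]
  exact norm_sq_add_smul_sub_le (by linarith) (by positivity) hε (hlam n)

theorem forwardBackward_iterate_antitone (hQ : FirmlyNonexpansive Q) (hC : IsCocoercive β C)
    (hγ : γ ∈ Set.Icc 0 (2 * β)) (hε : 0 ≤ ε) (hlam : ∀ n, lam n ∈ Set.Icc ε 1)
    (hz : ∀ n, z (n + 1) = z n + lam n • (forwardBackward Q C γ (z n) - z n))
    (hc : Function.IsFixedPt (forwardBackward Q C γ) c) :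
    Antitone fun n => ‖z n - c‖ ^ 2 := by
  have hγβ : 0 ≤ γ * (2 * β - γ) := mul_nonneg hγ.1 (by linarith [hγ.2])
  refine antitone_nat_of_succ_le fun n => ?_
  have h := forwardBackward_fejer hQ hC hγ hε hlam hz hc n
  have hD : 0 ≤ ε * (γ * (2 * β - γ) * ‖C (z n) - C c‖ ^ 2
      + ‖forwardBackward Q C γ (z n) - z n + γ • (C (z n) - C c)‖ ^ 2) := by positivity
  linarith

theorem tendsto_forwardBackward_iterate (hQ : FirmlyNonexpansive Q) (hC : IsCocoercive β C)
    (hγ : γ ∈ Set.Ioo 0 (2 * β)) (hε : 0 < ε) (hlam : ∀ n, lam n ∈ Set.Icc ε 1)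
    (hz : ∀ n, z (n + 1) = z n + lam n • (forwardBackward Q C γ (z n) - z n))
    (hc : Function.IsFixedPt (forwardBackward Q C γ) c) :
    Tendsto (fun n => C (z n) - C c) atTop (𝓝 0) ∧
      Tendsto (fun n => forwardBackward Q C γ (z n) - z n) atTop (𝓝 0) := by
  set T := forwardBackward Q C γ
  have hγβ : 0 < γ * (2 * β - γ) := mul_pos hγ.1 (by linarith [hγ.2])
  set D := fun n => γ * (2 * β - γ) * ‖C (z n) - C c‖ ^ 2
    + ‖T (z n) - z n + γ • (C (z n) - C c)‖ ^ 2
  have hD : Tendsto D atTop (𝓝 0) := by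
    simpa [hε.ne'] using (tendsto_zero_of_succ_add_le (a := fun n => ‖z n - c‖ ^ 2)
      (fun n => sq_nonneg _) (fun n => by positivity)
      (forwardBackward_fejer hQ hC (Set.Ioo_subset_Icc_self hγ) hε.le hlam hz hc)).const_mul ε⁻¹
  have hCz : Tendsto (fun n => C (z n) - C c) atTop (𝓝 0) :=
    tendsto_zero_of_norm_sq_le (γ * (2 * β - γ))⁻¹ (fun n => by
      rw [inv_mul_eq_div, le_div_iff₀ hγβ]
      simp only [D]
      nlinarith [sq_nonneg ‖T (z n) - z n + γ • (C (z n) - C c)‖]) hD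
  have hsum : Tendsto (fun n => T (z n) - z n + γ • (C (z n) - C c)) atTop (𝓝 0) :=
    tendsto_zero_of_norm_sq_le 1 (fun n => by
      simp only [D]; nlinarith [mul_nonneg hγβ.le (sq_nonneg ‖C (z n) - C c‖)]) hD
  exact ⟨hCz, by simpa using hsum.sub (hCz.const_smul γ)⟩

end Iteration

end ForwardBackward

section WeakConvergence

variable {z : ℕ → E}

/-- Subnets of `z` are encoded as nontrivial filters finer than `atTop`. -/
def IsWeakClusterPt (z : ℕ → E) (w : E) : Prop :=
  ∃ l ≤ atTop, l.NeBot ∧ ∀ v, Tendsto (fun n => ⟪z n, v⟫) l (𝓝 ⟪w, v⟫)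

theorem IsWeakClusterPt.eq_of_tendsto_norm_sub_sq {w₁ w₂ : E} (h₁ : IsWeakClusterPt z w₁)
    (h₂ : IsWeakClusterPt z w₂) (hL₁ : ∃ L, Tendsto (fun n => ‖z n - w₁‖ ^ 2) atTop (𝓝 L))
    (hL₂ : ∃ L, Tendsto (fun n => ‖z n - w₂‖ ^ 2) atTop (𝓝 L)) : w₁ = w₂ := by
  obtain ⟨L₁, hL₁⟩ := hL₁
  obtain ⟨L₂, hL₂⟩ := hL₂
  have hpolar : ∀ n, ⟪z n, w₁ - w₂⟫
      = (‖w₁‖ ^ 2 - ‖w₂‖ ^ 2 - (‖z n - w₁‖ ^ 2 - ‖z n - w₂‖ ^ 2)) / 2 := fun n => by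
    rw [inner_sub_right, norm_sub_sq_real, norm_sub_sq_real]; ring
  have hlim : Tendsto (fun n => ⟪z n, w₁ - w₂⟫) atTop
      (𝓝 ((‖w₁‖ ^ 2 - ‖w₂‖ ^ 2 - (L₁ - L₂)) / 2)) := by
    simpa only [hpolar] using (tendsto_const_nhds.sub (hL₁.sub hL₂)).div_const 2
  have hval : ∀ w, IsWeakClusterPt z w →
      ⟪w, w₁ - w₂⟫ = (‖w₁‖ ^ 2 - ‖w₂‖ ^ 2 - (L₁ - L₂)) / 2 := by
    rintro w ⟨l, hl, hne, hw⟩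
    exact tendsto_nhds_unique (hw _) (hlim.mono_left hl)
  have h : ⟪w₁ - w₂, w₁ - w₂⟫ = 0 := by rw [inner_sub_left, hval _ h₁, hval _ h₂, sub_self]
  exact sub_eq_zero.1 (inner_self_eq_zero.1 h)

theorem norm_sub_apply_sq_le {T : E → E} (hT : LipschitzWith 1 T) (a w : E) :
    ‖w - T w‖ ^ 2 ≤ ‖T a - a‖ ^ 2 + 2 * ‖T a - a‖ * ‖a - w‖ - 2 * ⟪a - w, w - T w⟫ := by
  have htri : ‖a - T w‖ ≤ ‖T a - a‖ + ‖a - w‖ := by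
    calc ‖a - T w‖ = ‖(a - T a) + (T a - T w)‖ := by rw [sub_add_sub_cancel]
      _ ≤ ‖T a - a‖ + ‖a - w‖ := (norm_add_le _ _).trans
        (add_le_add (norm_sub_rev _ _).le (by simpa using hT.norm_sub_le a w))
  have hexpand : ‖a - T w‖ ^ 2 = ‖a - w‖ ^ 2 + 2 * ⟪a - w, w - T w⟫ + ‖w - T w‖ ^ 2 := by
    rw [← norm_add_sq_real, sub_add_sub_cancel]
  nlinarith [pow_le_pow_left₀ (norm_nonneg _) htri 2]

/-- Demiclosedness of `id - T` at `0`. -/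
theorem IsWeakClusterPt.isFixedPt {T : E → E} (hT : LipschitzWith 1 T) {R : ℝ}
    (hbd : ∀ n, ‖z n‖ ≤ R) (hres : Tendsto (fun n => T (z n) - z n) atTop (𝓝 0)) {w : E}
    (hw : IsWeakClusterPt z w) : Function.IsFixedPt T w := by
  obtain ⟨l, hl, hne, hweak⟩ := hw
  have hr : Tendsto (fun n => ‖T (z n) - z n‖) l (𝓝 0) := by
    simpa using (hres.mono_left hl).norm
  have hcross : Tendsto (fun n => ‖T (z n) - z n‖ * ‖z n - w‖) l (𝓝 0) := by
    refine squeeze_zero (fun n => by positivity) (fun n => ?_)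
      (by simpa using hr.mul_const (R + ‖w‖))
    exact mul_le_mul_of_nonneg_left ((norm_sub_le _ _).trans (by linarith [hbd n]))
      (norm_nonneg _)
  have hinner : Tendsto (fun n => ⟪z n - w, w - T w⟫) l (𝓝 0) := by
    simpa only [inner_sub_left, sub_self] using (hweak (w - T w)).sub_const ⟪w, w - T w⟫
  have hbound : Tendsto (fun n => ‖T (z n) - z n‖ ^ 2 + 2 * ‖T (z n) - z n‖ * ‖z n - w‖
      - 2 * ⟪z n - w, w - T w⟫) l (𝓝 0) := by
    simpa [mul_assoc] using ((hr.pow 2).add (hcross.const_mul 2)).sub (hinner.const_mul 2)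
  have hle : ‖w - T w‖ ^ 2 ≤ 0 :=
    ge_of_tendsto hbound (Eventually.of_forall fun n => norm_sub_apply_sq_le hT (z n) w)
  have h0 : w - T w = 0 := by
    rw [← norm_eq_zero]
    exact pow_eq_zero_iff two_ne_zero |>.1 (le_antisymm hle (sq_nonneg _))
  exact (sub_eq_zero.1 h0).symm

variable [CompleteSpace E]

theorem WeakLim.map {w : E} (h : WeakLim z w) (L : E →L[ℝ] E) :
    WeakLim (fun n => L (z n)) (L w) := fun v => by
  simpa only [ContinuousLinearMap.adjoint_inner_right] using h (L.adjoint v)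

theorem isWeakClusterPt_of_mapClusterPt {ψ : WeakDual ℝ E}
    (h : MapClusterPt ψ atTop fun n => StrongDual.toWeakDual (InnerProductSpace.toDual ℝ E (z n))) :
    IsWeakClusterPt z ((InnerProductSpace.toDual ℝ E).symm (WeakDual.toStrongDual ψ)) := by
  set Φ := fun n => StrongDual.toWeakDual (InnerProductSpace.toDual ℝ E (z n))
  refine ⟨atTop ⊓ comap Φ (𝓝 ψ), inf_le_left, ?_, fun v => ?_⟩
  · rw [← map_neBot_iff Φ, Filter.push_pull, inf_comm]
    exact h
  · have hΦ : Tendsto Φ (atTop ⊓ comap Φ (𝓝 ψ)) (𝓝 ψ) := tendsto_comap.mono_left inf_le_right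
    rw [InnerProductSpace.toDual_symm_apply]
    exact ((WeakDual.eval_continuous v).tendsto ψ).comp hΦ

theorem exists_weakLim_of_opial {F : Set E} {R : ℝ} (hbd : ∀ n, ‖z n‖ ≤ R)
    (hdist : ∀ c ∈ F, ∃ L, Tendsto (fun n => ‖z n - c‖ ^ 2) atTop (𝓝 L))
    (hclus : ∀ w, IsWeakClusterPt z w → w ∈ F) : ∃ w ∈ F, WeakLim z w := by
  -- Banach–Alaoglu, transported through the Riesz isomorphism.
  set Φ := fun n => StrongDual.toWeakDual (InnerProductSpace.toDual ℝ E (z n))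
  set K := WeakDual.toStrongDual ⁻¹' Metric.closedBall (0 : StrongDual ℝ E) R
  have hK : IsCompact K := WeakDual.isCompact_closedBall 0 R
  have hΦK : ∀ n, Φ n ∈ K := fun n => by simpa [K, Φ] using hbd n
  set rep := fun ψ : WeakDual ℝ E => (InnerProductSpace.toDual ℝ E).symm (WeakDual.toStrongDual ψ)
  obtain ⟨ψ₀, -, hψ₀⟩ := hK.exists_mapClusterPt (f := atTop) (u := Φ)
    (tendsto_principal.2 (Eventually.of_forall hΦK))
  have hcl₀ := isWeakClusterPt_of_mapClusterPt hψ₀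
  have hΦ : Tendsto Φ atTop (𝓝 ψ₀) := by
    refine hK.tendsto_nhds_of_unique_mapClusterPt (Eventually.of_forall hΦK) fun ψ _ hψ => ?_
    have hcl := isWeakClusterPt_of_mapClusterPt hψ
    have hrep : rep ψ = rep ψ₀ := hcl.eq_of_tendsto_norm_sub_sq hcl₀
      (hdist _ (hclus _ hcl)) (hdist _ (hclus _ hcl₀))
    exact WeakDual.toStrongDual.injective ((InnerProductSpace.toDual ℝ E).symm.injective hrep)
  have hw : WeakLim z (rep ψ₀) := fun v => by
    rw [InnerProductSpace.toDual_symm_apply]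
    exact ((WeakDual.eval_continuous v).tendsto ψ₀).comp hΦ
  exact ⟨rep ψ₀, hclus _ ⟨atTop, le_rfl, inferInstance, hw⟩, hw⟩

theorem exists_weakLim_forwardBackward_iterate {Q C : E → E} {β γ ε : ℝ} {lam : ℕ → ℝ}
    (hQ : FirmlyNonexpansive Q) (hC : IsCocoercive β C) (hγ : γ ∈ Set.Ioo 0 (2 * β))
    (hε : 0 < ε) (hlam : ∀ n, lam n ∈ Set.Icc ε 1)
    (hz : ∀ n, z (n + 1) = z n + lam n • (forwardBackward Q C γ (z n) - z n))
    (hfix : ∃ c, Function.IsFixedPt (forwardBackward Q C γ) c) :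
    ∃ zbar, Function.IsFixedPt (forwardBackward Q C γ) zbar ∧ WeakLim z zbar ∧
      Tendsto (fun n => z (n + 1) - z n) atTop (𝓝 0) ∧
      Tendsto (fun n => C (z n)) atTop (𝓝 (C zbar)) := by
  obtain ⟨c, hc⟩ := hfix
  have hanti := fun c (hc : Function.IsFixedPt _ c) =>
    forwardBackward_iterate_antitone hQ hC (Set.Ioo_subset_Icc_self hγ) hε.le hlam hz hc
  obtain ⟨hCz, hres⟩ := tendsto_forwardBackward_iterate hQ hC hγ hε hlam hz hc
  have hbd : ∀ n, ‖z n‖ ≤ ‖c‖ + ‖z 0 - c‖ := fun n => by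
    have h := (sq_le_sq₀ (norm_nonneg _) (norm_nonneg _)).1 (hanti c hc (Nat.zero_le n))
    calc ‖z n‖ = ‖c + (z n - c)‖ := by rw [add_sub_cancel]
      _ ≤ ‖c‖ + ‖z 0 - c‖ := (norm_add_le _ _).trans (by linarith)
  obtain ⟨zbar, hzbar, hweak⟩ := exists_weakLim_of_opial hbd
    (fun c hc => (hanti c hc).exists_tendsto_of_nonneg fun n => sq_nonneg _)
    (fun w hw => hw.isFixedPt (lipschitzWith_one_forwardBackward hQ hC
      (Set.Ioo_subset_Icc_self hγ)) hbd hres)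
  refine ⟨zbar, hzbar, hweak, ?_, ?_⟩
  · refine squeeze_zero_norm (fun n => ?_) (by simpa using hres.norm)
    rw [hz n, add_sub_cancel_left, norm_smul, Real.norm_eq_abs,
      abs_of_nonneg (hε.le.trans (hlam n).1)]
    exact mul_le_of_le_one_left (norm_nonneg _) (hlam n).2
  · rw [apply_eq_of_isFixedPt_forwardBackward hQ hC hγ hzbar hc]
    simpa using hCz.add_const (C c)

end WeakConvergence

section Splitting

variable {V : Submodule ℝ E} [V.HasOrthogonalProjection] {A : E → Set E} {B J : E → E} {γ : ℝ}
  {x y : E}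

theorem starProjection_add_smul (hx : x ∈ V) (hy : y ∈ Vᗮ) :
    V.starProjection (x + γ • y) = x :=
  V.eq_starProjection_of_mem_orthogonal' hx (Vᗮ.smul_mem γ hy) rfl

theorem forwardBackward_partialResolvent_apply (hx : x ∈ V) (hy : y ∈ Vᗮ) :
    forwardBackward (partialResolvent V J) (compression V B) γ (x + γ • y)
      = V.reflection (J (x - γ • V.starProjection (B x) + γ • y)) + γ • y := by
  have hw : x + γ • y - γ • V.starProjection (B x) = x - γ • V.starProjection (B x) + γ • y := by
    abel
  have hperp : Vᗮ.starProjection (x - γ • V.starProjection (B x) + γ • y) = γ • y :=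
    Vᗮ.eq_starProjection_of_mem_orthogonal' (Vᗮ.smul_mem γ hy)
      (V.le_orthogonal_orthogonal (V.sub_mem hx (V.smul_mem γ (V.starProjection_apply_mem _))))
      (add_comm _ _)
  rw [forwardBackward, compression, starProjection_add_smul hx hy, hw,
    partialResolvent_eq_reflection_add, hperp]

theorem starProjection_orthogonal_add_smul (hx : x ∈ V) (hy : y ∈ Vᗮ) :
    Vᗮ.starProjection (x + γ • y) = γ • y := by
  rw [Submodule.starProjection_orthogonal_val, starProjection_add_smul hx hy, add_sub_cancel_left]

theorem splitting_iterate_mem {x y p : ℕ → E} {lam : ℕ → ℝ} (hx0 : x 0 ∈ V) (hy0 : y 0 ∈ Vᗮ)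
    (hyr : ∀ n, y (n + 1) = y n + (lam n / γ) • (V.starProjection (p n) - p n))
    (hxr : ∀ n, x (n + 1) = x n + lam n • (V.starProjection (p n) - x n)) (n : ℕ) :
    x n ∈ V ∧ y n ∈ Vᗮ := by
  induction n with
  | zero => exact ⟨hx0, hy0⟩
  | succ n ih =>
    rw [hxr, hyr]
    refine ⟨V.add_mem ih.1 (V.smul_mem _ (V.sub_mem (V.starProjection_apply_mem _) ih.1)),
      Vᗮ.add_mem ih.2 (Vᗮ.smul_mem _ ?_)⟩
    rw [← neg_sub, ← Submodule.starProjection_orthogonal_val]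
    exact Vᗮ.neg_mem (Vᗮ.starProjection_apply_mem _)

theorem splitting_step_eq (hγ : γ ≠ 0) (hx : x ∈ V) (hy : y ∈ Vᗮ) {p : E}
    (hp : p = J (x - γ • V.starProjection (B x) + γ • y)) (lam : ℝ) :
    x + lam • (V.starProjection p - x) + γ • (y + (lam / γ) • (V.starProjection p - p))
      = x + γ • y + lam • (forwardBackward (partialResolvent V J) (compression V B) γ (x + γ • y)
        - (x + γ • y)) := by
  rw [forwardBackward_partialResolvent_apply hx hy, ← hp, Submodule.reflection_apply, smul_add,
    smul_smul, mul_div_cancel₀ _ hγ]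
  module

theorem splitting_limits [CompleteSpace E] (hγ : γ ≠ 0) {x y : ℕ → E}
    (hmem : ∀ n, x n ∈ V ∧ y n ∈ Vᗮ) {zbar : E}
    (hweak : WeakLim (fun n => x n + γ • y n) zbar)
    (hdiff : Tendsto (fun n => x (n + 1) + γ • y (n + 1) - (x n + γ • y n)) atTop (𝓝 0)) :
    WeakLim x (V.starProjection zbar) ∧ WeakLim y (γ⁻¹ • Vᗮ.starProjection zbar) ∧
      Tendsto (fun n => x (n + 1) - x n) atTop (𝓝 0) ∧
      Tendsto (fun n => y (n + 1) - y n) atTop (𝓝 0) := by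
  have hx : ∀ n, V.starProjection (x n + γ • y n) = x n :=
    fun n => starProjection_add_smul (hmem n).1 (hmem n).2
  have hy : ∀ n, (γ⁻¹ • Vᗮ.starProjection) (x n + γ • y n) = y n := fun n => by
    rw [smul_apply, starProjection_orthogonal_add_smul (hmem n).1 (hmem n).2,
      inv_smul_smul₀ hγ]
  refine ⟨by simpa only [hx] using hweak.map V.starProjection, ?_, ?_, ?_⟩
  · have hweak_y := hweak.map (γ⁻¹ • Vᗮ.starProjection)
    simp only [hy] at hweak_y
    exact hweak_y
  · simpa only [Function.comp_def, map_sub, hx] using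
      (V.starProjection.continuous.tendsto' 0 0 (map_zero _)).comp hdiff
  · simpa only [Function.comp_def, map_sub, hy] using
      ((γ⁻¹ • Vᗮ.starProjection).continuous.tendsto' 0 0 (map_zero _)).comp hdiff

theorem isFixedPt_forwardBackward_partialResolvent_iff (hγ : γ ≠ 0)
    (hJ : ∀ s p, J s = p ↔ ∃ u ∈ A p, s - p = γ • u) (hx : x ∈ V) (hy : y ∈ Vᗮ) :
    Function.IsFixedPt (forwardBackward (partialResolvent V J) (compression V B) γ) (x + γ • y)
      ↔ ∃ u ∈ A x, y = u + V.starProjection (B x) := by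
  rw [Function.IsFixedPt, forwardBackward_partialResolvent_apply hx hy, add_left_inj,
    ← V.reflection_mem_subspace_eq_self hx, V.reflection.injective.eq_iff,
    V.reflection_mem_subspace_eq_self hx, hJ]
  refine exists_congr fun u => and_congr_right fun _ => ?_
  rw [show x - γ • V.starProjection (B x) + γ • y - x = γ • (y - V.starProjection (B x)) by
    module, smul_right_inj hγ, sub_eq_iff_eq_add]

theorem exists_add_mem_normalConeSub_iff :
    (∃ u ∈ A x, ∃ w ∈ normalConeSub V x, u + B x + w = 0)
      ↔ x ∈ V ∧ ∃ u ∈ A x, u + V.starProjection (B x) ∈ Vᗮ := by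
  have hsplit : ∀ u, u + B x = (u + V.starProjection (B x)) + Vᗮ.starProjection (B x) := by
    intro u
    rw [Submodule.starProjection_orthogonal_val]
    abel
  constructor
  · rintro ⟨u, hu, w, ⟨hx, hw⟩, hsum⟩
    refine ⟨hx, u, hu, ?_⟩
    have hu' : u + V.starProjection (B x) = -(w + Vᗮ.starProjection (B x)) := by
      rw [eq_neg_iff_add_eq_zero, ← hsum, hsplit]
      abel
    rw [hu']
    exact Vᗮ.neg_mem (Vᗮ.add_mem hw (Vᗮ.starProjection_apply_mem _))
  · rintro ⟨hx, u, hu, hy⟩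
    refine ⟨u, hu, -(u + B x), ⟨hx, ?_⟩, add_neg_cancel _⟩
    rw [hsplit]
    exact Vᗮ.neg_mem (Vᗮ.add_mem hy (Vᗮ.starProjection_apply_mem _))

theorem solution_of_isFixedPt_forwardBackward_partialResolvent (hγ : γ ≠ 0)
    (hJ : ∀ s p, J s = p ↔ ∃ u ∈ A p, s - p = γ • u) {z : E}
    (hz : Function.IsFixedPt (forwardBackward (partialResolvent V J) (compression V B) γ) z) :
    (∃ u ∈ A (V.starProjection z), ∃ w ∈ normalConeSub V (V.starProjection z),
        u + B (V.starProjection z) + w = 0) ∧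
      γ⁻¹ • Vᗮ.starProjection z ∈ Vᗮ ∧
      ∃ u ∈ A (V.starProjection z),
        γ⁻¹ • Vᗮ.starProjection z = u + V.starProjection (B (V.starProjection z)) := by
  have hx := V.starProjection_apply_mem z
  have hy := Vᗮ.smul_mem γ⁻¹ (Vᗮ.starProjection_apply_mem z)
  rw [← V.starProjection_add_starProjection_orthogonal z,
    ← smul_inv_smul₀ hγ (Vᗮ.starProjection z),
    isFixedPt_forwardBackward_partialResolvent_iff hγ hJ hx hy] at hz
  obtain ⟨u, hu, hyu⟩ := hz
  exact ⟨exists_add_mem_normalConeSub_iff.2 ⟨hx, u, hu, hyu ▸ hy⟩, hy, u, hu, hyu⟩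

end Splitting

end

theorem statement14_general
    (V : Submodule ℝ H)
    (P : H → H) (hP : ∀ x : H, P x ∈ V ∧ x - P x ∈ Vᗮ)
    (A : H → Set H) (hA : IsMaxMonotoneOp A)
    (β : ℝ) (hβ : 0 < β)
    (B : H → H)
    (hB : ∀ x ∈ V, ∀ y ∈ V, β * ‖B x - B y‖ ^ 2 ≤ ⟪x - y, B x - B y⟫)
    (Z : Set H) (hZ : Z = {x | ∃ u ∈ A x, ∃ w ∈ normalConeSub V x, u + B x + w = 0})
    (hZne : Z.Nonempty)
    (γ : ℝ) (hγ : γ ∈ Set.Ioo (0 : ℝ) (2 * β))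
    (ε : ℝ) (hε : ε ∈ Set.Ioo (0 : ℝ) 1)
    (lam : ℕ → ℝ) (hlam : ∀ n, lam n ∈ Set.Icc ε 1)
    (J : H → H) (hJ : ∀ x p : H, J x = p ↔ ∃ u ∈ A p, x - p = γ • u)
    (x y s p : ℕ → H)
    (hx0 : x 0 ∈ V) (hy0 : y 0 ∈ Vᗮ)
    (hs : ∀ n, s n = x n - γ • P (B (x n)) + γ • y n)
    (hp : ∀ n, p n = J (s n))
    (hyr : ∀ n, y (n + 1) = y n + (lam n / γ) • (P (p n) - p n))
    (hxr : ∀ n, x (n + 1) = x n + lam n • (P (p n) - x n)) :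
    (∀ n, x n ∈ V ∧ y n ∈ Vᗮ) ∧
    ∃ xbar ∈ Z, ∃ ybar : H, ybar ∈ Vᗮ ∧ (∃ u ∈ A xbar, ybar = u + P (B xbar)) ∧
      WeakLim x xbar ∧ WeakLim y ybar ∧
      Tendsto (fun n => x (n + 1) - x n) atTop (nhds 0) ∧
      Tendsto (fun n => y (n + 1) - y n) atTop (nhds 0) ∧
      Tendsto (fun n => P (B (x n))) atTop (nhds (P (B xbar))) := by
  have hγ0 := hγ.1
  have : V.HasOrthogonalProjection := ⟨fun v => ⟨P v, hP v⟩⟩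
  obtain rfl : P = V.starProjection :=
    funext fun v => (V.eq_starProjection_of_mem_orthogonal (hP v).1 (hP v).2).symm
  have hmem := splitting_iterate_mem hx0 hy0 hyr hxr
  set T := forwardBackward (partialResolvent V J) (compression V B) γ
  have hz : ∀ n, x (n + 1) + γ • y (n + 1)
      = x n + γ • y n + lam n • (T (x n + γ • y n) - (x n + γ • y n)) := fun n => by
    rw [hxr, hyr]
    exact splitting_step_eq hγ0.ne' (hmem n).1 (hmem n).2 (by rw [hp, hs]) (lam n)
  have hfix : ∃ c, Function.IsFixedPt T c := by
    obtain ⟨x₀, hx₀⟩ := hZne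
    rw [hZ, Set.mem_ofPred_eq, exists_add_mem_normalConeSub_iff] at hx₀
    obtain ⟨hx₀V, u, hu, hy₀⟩ := hx₀
    exact ⟨_, (isFixedPt_forwardBackward_partialResolvent_iff hγ0.ne' hJ hx₀V hy₀).2 ⟨u, hu, rfl⟩⟩
  have hQ := (firmlyNonexpansive_of_resolvent hA.1 hγ0.le
    fun s => (hJ s (J s)).1 rfl).partialResolvent V
  obtain ⟨zbar, hzbar, hweak, hdiff, hC⟩ := exists_weakLim_forwardBackward_iterate
    (z := fun n => x n + γ • y n) hQ (isCocoercive_compression hβ.le hB) hγ hε.1 hlam hz hfix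
  obtain ⟨hwx, hwy, hdx, hdy⟩ := splitting_limits hγ0.ne' hmem hweak hdiff
  obtain ⟨hZbar, hybar, hAbar⟩ :=
    solution_of_isFixedPt_forwardBackward_partialResolvent hγ0.ne' hJ hzbar
  refine ⟨hmem, _, hZ ▸ hZbar, _, hybar, hAbar, hwx, hwy, hdx, hdy, hC.congr fun n => ?_⟩
  rw [compression, starProjection_add_smul (hmem n).1 (hmem n).2]

theorem statement14
    (V : Submodule ℝ H) (hV : IsClosed (V : Set H))
    (P : H → H) (hP : ∀ x : H, P x ∈ V ∧ x - P x ∈ Vᗮ)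
    (A : H → Set H) (hA : IsMaxMonotoneOp A)
    (β : ℝ) (hβ : 0 < β)
    (B : H → H)
    (hB : ∀ x ∈ V, ∀ y ∈ V, β * ‖B x - B y‖ ^ 2 ≤ ⟪x - y, B x - B y⟫)
    (Z : Set H) (hZ : Z = {x | ∃ u ∈ A x, ∃ w ∈ normalConeSub V x, u + B x + w = 0})
    (hZne : Z.Nonempty)
    (γ : ℝ) (hγ : γ ∈ Set.Ioo (0 : ℝ) (2 * β))
    (ε : ℝ) (hε : ε ∈ Set.Ioo (0 : ℝ) 1)
    (lam : ℕ → ℝ) (hlam : ∀ n, lam n ∈ Set.Icc ε 1)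
    (J : H → H) (hJ : ∀ x p : H, J x = p ↔ ∃ u ∈ A p, x - p = γ • u)
    (x y s p : ℕ → H)
    (hx0 : x 0 ∈ V) (hy0 : y 0 ∈ Vᗮ)
    (hs : ∀ n, s n = x n - γ • P (B (x n)) + γ • y n)
    (hp : ∀ n, p n = J (s n))
    (hyr : ∀ n, y (n + 1) = y n + (lam n / γ) • (P (p n) - p n))
    (hxr : ∀ n, x (n + 1) = x n + lam n • (P (p n) - x n)) :
    (∀ n, x n ∈ V ∧ y n ∈ Vᗮ) ∧
    ∃ xbar ∈ Z, ∃ ybar : H, ybar ∈ Vᗮ ∧ (∃ u ∈ A xbar, ybar = u + P (B xbar)) ∧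
      WeakLim x xbar ∧ WeakLim y ybar ∧
      Tendsto (fun n => x (n + 1) - x n) atTop (nhds 0) ∧
      Tendsto (fun n => y (n + 1) - y n) atTop (nhds 0) ∧
      Tendsto (fun n => P (B (x n))) atTop (nhds (P (B xbar))) :=
  statement14_general V P hP A hA β hβ B hB Z hZ hZne γ hγ ε hε lam hlam J hJ x y s p hx0 hy0 hs hp
    hyr hxr
end

section
/- Let H be a real Hilbert space, V a closed vector subspace of H, A : H → 2^H maximally monotone, B : H → H β-cocoercive on V for some β > 0, let γ ∈ (0, 2β), let ε ∈ (0,1), let (λ_n) be a sequence in [ε, 1], and let x_0 ∈ V and y_0 ∈ V⊥. Define the sequence (x_n¹, y_n¹) by: z_0 = x_0 − γ y_0 and, for every n, x_n¹ = P_V z_n, y_n¹ = −P_{V⊥} z_n / γ, z_{n+1} = z_n + λ_n( J_{γA}( x_n¹ − γ P_V(B x_n¹) + γ y_n¹ ) − x_n¹ ). Define the sequence (x_n², y_n²) by: x_0² = x_0, y_0² = y_0 and, for every n, p_n = J_{γA}( x_n² − γ P_V(B x_n²) + γ y_n² ), y_{n+1}² = y_n² + (λ_n/γ)(P_V p_n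 − p_n), x_{n+1}² = x_n² + λ_n(P_V p_n − x_n²). Then for every n ∈ ℕ, x_n¹ = x_n² and y_n¹ = y_n². -/
/-!
Both iterations carry the invariant `z n = x2 n - γ • y2 n` with `x2 n ∈ V` and `y2 n ∈ Vᗮ`.
Since `x - γ • y` with `x ∈ V`, `y ∈ Vᗮ` has `V`-component `x` and `Vᗮ`-component `-γ • y`,
the invariant says that `(x1 n, y1 n)` is read off `z n` as `(x2 n, y2 n)`; then both updates
feed the same point to `J`, and the update of `z` splits into those of `x2` and `y2`.
-/

open Filter Topology
open scoped RealInnerProductSpace Pointwise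

variable {H : Type*} [NormedAddCommGroup H] [InnerProductSpace ℝ H] [CompleteSpace H]

section ProjectionDecomposition

variable {E : Type*} [NormedAddCommGroup E] [InnerProductSpace ℝ E]
  {V : Submodule ℝ E} {P : E → E}

theorem apply_add_eq_of_mem_orthogonal (hP : ∀ x : E, P x ∈ V ∧ x - P x ∈ Vᗮ)
    {a b : E} (ha : a ∈ V) (hb : b ∈ Vᗮ) : P (a + b) = a := by
  have hV : P (a + b) - a ∈ V := V.sub_mem (hP _).1 ha
  have hVperp : P (a + b) - a ∈ Vᗮ := by
    have h : P (a + b) - a = b - (a + b - P (a + b)) := by abel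
    rw [h]
    exact Vᗮ.sub_mem hb (hP _).2
  have h0 : P (a + b) - a ∈ V ⊓ Vᗮ := ⟨hV, hVperp⟩
  rwa [Submodule.inf_orthogonal_eq_bot, Submodule.mem_bot, sub_eq_zero] at h0

theorem apply_sub_smul_eq_and_neg_inv_smul_sub_eq (hP : ∀ x : E, P x ∈ V ∧ x - P x ∈ Vᗮ)
    {γ : ℝ} (hγ : γ ≠ 0) {x y : E} (hx : x ∈ V) (hy : y ∈ Vᗮ) :
    P (x - γ • y) = x ∧ -(γ⁻¹ • (x - γ • y - P (x - γ • y))) = y := by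
  have hPx : P (x - γ • y) = x := by
    rw [sub_eq_add_neg]
    exact apply_add_eq_of_mem_orthogonal hP hx (Vᗮ.neg_mem (Vᗮ.smul_mem γ hy))
  refine ⟨hPx, ?_⟩
  rw [hPx, sub_sub_cancel_left, smul_neg, neg_neg, smul_smul, inv_mul_cancel₀ hγ, one_smul]

end ProjectionDecomposition

theorem sub_smul_add_smul_sub_eq {K M : Type*} [Field K] [AddCommGroup M] [Module K M]
    {γ : K} (hγ : γ ≠ 0) (μ : K) (x y p q : M) :
    x - γ • y + μ • (p - x) = x + μ • (q - x) - γ • (y + (μ / γ) • (q - p)) := by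
  rw [smul_add, smul_smul, mul_div_cancel₀ μ hγ]
  module

theorem statement15_general
    (V : Submodule ℝ H)
    (P : H → H) (hP : ∀ x : H, P x ∈ V ∧ x - P x ∈ Vᗮ)
    (β : ℝ)
    (B : H → H)
    (γ : ℝ) (hγ : γ ∈ Set.Ioo (0 : ℝ) (2 * β))
    (lam : ℕ → ℝ)
    (J : H → H)
    (x0 y0 : H) (hx0 : x0 ∈ V) (hy0 : y0 ∈ Vᗮ)
    (z x1 y1 x2 y2 p : ℕ → H)
    (hz0 : z 0 = x0 - γ • y0)
    (hx1 : ∀ n, x1 n = P (z n))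
    (hy1 : ∀ n, y1 n = -(γ⁻¹ • (z n - P (z n))))
    (hzr : ∀ n, z (n + 1) =
      z n + lam n • (J (x1 n - γ • P (B (x1 n)) + γ • y1 n) - x1 n))
    (hx20 : x2 0 = x0) (hy20 : y2 0 = y0)
    (hpn : ∀ n, p n = J (x2 n - γ • P (B (x2 n)) + γ • y2 n))
    (hy2r : ∀ n, y2 (n + 1) = y2 n + (lam n / γ) • (P (p n) - p n))
    (hx2r : ∀ n, x2 (n + 1) = x2 n + lam n • (P (p n) - x2 n)) :
    ∀ n, x1 n = x2 n ∧ y1 n = y2 n := by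
  have hγ0 : γ ≠ 0 := hγ.1.ne'
  have hx2V : ∀ n, x2 n ∈ V := by
    intro n
    induction n with
    | zero => rwa [hx20]
    | succ n ih => rw [hx2r n]; exact V.add_mem ih (V.smul_mem _ (V.sub_mem (hP _).1 ih))
  have hy2V : ∀ n, y2 n ∈ Vᗮ := by
    intro n
    induction n with
    | zero => rwa [hy20]
    | succ n ih =>
      rw [hy2r n, ← neg_sub]
      exact Vᗮ.add_mem ih (Vᗮ.smul_mem _ (Vᗮ.neg_mem (hP _).2))
  have hz : ∀ n, z n = x2 n - γ • y2 n := by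
    intro n
    induction n with
    | zero => rw [hz0, hx20, hy20]
    | succ n ih =>
      obtain ⟨hPz, hres⟩ := apply_sub_smul_eq_and_neg_inv_smul_sub_eq hP hγ0 (hx2V n) (hy2V n)
      rw [hzr n, hx1 n, hy1 n, ih, hres, hPz, ← hpn n, hx2r n, hy2r n]
      exact sub_smul_add_smul_sub_eq hγ0 _ _ _ _ _
  intro n
  rw [hx1 n, hy1 n, hz n]
  exact apply_sub_smul_eq_and_neg_inv_smul_sub_eq hP hγ0 (hx2V n) (hy2V n)

theorem statement15
    (V : Submodule ℝ H) (hV : IsClosed (V : Set H))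
    (P : H → H) (hP : ∀ x : H, P x ∈ V ∧ x - P x ∈ Vᗮ)
    (A : H → Set H) (hA : IsMaxMonotoneOp A)
    (β : ℝ) (hβ : 0 < β)
    (B : H → H)
    (hB : ∀ x ∈ V, ∀ y ∈ V, β * ‖B x - B y‖ ^ 2 ≤ ⟪x - y, B x - B y⟫)
    (γ : ℝ) (hγ : γ ∈ Set.Ioo (0 : ℝ) (2 * β))
    (ε : ℝ) (hε : ε ∈ Set.Ioo (0 : ℝ) 1)
    (lam : ℕ → ℝ) (hlam : ∀ n, lam n ∈ Set.Icc ε 1)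
    (J : H → H) (hJ : ∀ x p : H, J x = p ↔ ∃ u ∈ A p, x - p = γ • u)
    (x0 y0 : H) (hx0 : x0 ∈ V) (hy0 : y0 ∈ Vᗮ)
    (z x1 y1 x2 y2 p : ℕ → H)
    (hz0 : z 0 = x0 - γ • y0)
    (hx1 : ∀ n, x1 n = P (z n))
    (hy1 : ∀ n, y1 n = -(γ⁻¹ • (z n - P (z n))))
    (hzr : ∀ n, z (n + 1) =
      z n + lam n • (J (x1 n - γ • P (B (x1 n)) + γ • y1 n) - x1 n))
    (hx20 : x2 0 = x0) (hy20 : y2 0 = y0)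
    (hpn : ∀ n, p n = J (x2 n - γ • P (B (x2 n)) + γ • y2 n))
    (hy2r : ∀ n, y2 (n + 1) = y2 n + (lam n / γ) • (P (p n) - p n))
    (hx2r : ∀ n, x2 (n + 1) = x2 n + lam n • (P (p n) - x2 n)) :
    ∀ n, x1 n = x2 n ∧ y1 n = y2 n :=
  statement15_general V P hP β B γ hγ lam J x0 y0 hx0 hy0 z x1 y1 x2 y2 p hz0 hx1 hy1 hzr hx20 hy20
    hpn hy2r hx2r
end
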